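/- arXiv:2201.07405 — 3 statements merged into one kernel-verified Lean document; each statement's English description precedes it below -/
import Mathlib

section
/- Fix α₀ > d/2 and s ≥ α₀. For nonnegative sequences (a_j), (b_j) indexed by ℤ^d with Σ_j a_j² ⟨j⟩^{2s} < ∞ and Σ_j b_j² ⟨j⟩^{2s} < ∞, the convolution-type bound holds: Σ_{k} (Σ_j a_j b_{k−j})² ⟨k⟩^{2s} ≤ (K₀ ‖a‖_{α₀} ‖b‖_s + K₁(s) ‖a‖_s ‖b‖_{α₀})², where ‖c‖_t² = Σ_k c_k² ⟨k⟩^{2t}, K₀ = √(20 Σ_k ⟨k⟩^{−2α₀}) and K₁(s) = (1 − 10^{−1/(2s)})^{−s} √(2 Σ_k ⟨k⟩^{−2α₀}). -/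
open scoped BigOperators ENNReal NNReal
open MeasureTheory

noncomputable section

abbrev Mat (d : ℕ) := (Fin d → ℤ) → (Fin d → ℤ) → ℝ

/-- `|k|_∞` as a real number. -/
def absInf {d : ℕ} (k : Fin d → ℤ) : ℝ :=
  ((Finset.univ.sup fun v => (k v).natAbs : ℕ) : ℝ)

/-- `⟨k⟩ = max (1, |k|_∞)`. -/
def jp {d : ℕ} (k : Fin d → ℤ) : ℝ := max 1 (absInf k)

/-- sup-norm of the `k`-diagonal of a matrix. -/
def diagNorm {d : ℕ} (A : Mat d) (k : Fin d → ℤ) : ℝ := ⨆ i, |A i (i - k)|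

/-- Sobolev norm `‖A‖_s`. -/
def SNorm {d : ℕ} (s : ℝ) (A : Mat d) : ℝ :=
  Real.sqrt (∑' k : Fin d → ℤ, (diagNorm A k) ^ 2 * (jp k) ^ (2 * s))

/-- `A` has finite `‖·‖_s` norm. -/
def MemS {d : ℕ} (s : ℝ) (A : Mat d) : Prop :=
  (∀ k : Fin d → ℤ, BddAbove (Set.range fun i => |A i (i - k)|)) ∧
  Summable (fun k : Fin d → ℤ => (diagNorm A k) ^ 2 * (jp k) ^ (2 * s))

def K0 (d : ℕ) (α₀ : ℝ) : ℝ :=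
  Real.sqrt (20 * ∑' k : Fin d → ℤ, (jp k) ^ (-(2 * α₀)))

def K1 (d : ℕ) (α₀ s : ℝ) : ℝ :=
  (1 - (10:ℝ) ^ (-(1 / (2 * s)))) ^ (-s) *
    Real.sqrt (2 * ∑' k : Fin d → ℤ, (jp k) ^ (-(2 * α₀)))

def C0 (d : ℕ) (α₀ : ℝ) : ℝ := K0 d α₀ + K1 d α₀ α₀

def matMul {d : ℕ} (X Y : Mat d) : Mat d := fun i j => ∑' l : Fin d → ℤ, X i l * Y l j

def idMat {d : ℕ} : Mat d := fun i j => if i = j then 1 else 0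

def powMat {d : ℕ} (X : Mat d) : ℕ → Mat d
  | 0 => idMat
  | n + 1 => matMul X (powMat X n)

def prodList {d : ℕ} (l : List (Mat d)) : Mat d := l.foldr matMul idMat

/-- Weighted ℓ² norm of a sequence. -/
def seqNorm {d : ℕ} (t : ℝ) (c : (Fin d → ℤ) → ℝ) : ℝ :=
  Real.sqrt (∑' m : Fin d → ℤ, (c m) ^ 2 * (jp m) ^ (2 * t))


set_option maxHeartbeats 1000000

section helpers

lemma one_le_jp {d : ℕ} (k : Fin d → ℤ) : 1 ≤ jp k := le_max_left _ _
lemma jp_pos {d : ℕ} (k : Fin d → ℤ) : 0 < jp k := lt_of_lt_of_le one_pos (one_le_jp k)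

lemma absInf_nonneg' {d : ℕ} (k : Fin d → ℤ) : 0 ≤ absInf k := Nat.cast_nonneg _

lemma g_le_jp {d : ℕ} (k : Fin d → ℤ) (v : Fin d) : max 1 |((k v : ℤ) : ℝ)| ≤ jp k := by
  have h1 : (k v).natAbs ≤ Finset.univ.sup fun v => (k v).natAbs :=
    Finset.le_sup (f := fun v => (k v).natAbs) (Finset.mem_univ v)
  have h2 : |((k v : ℤ) : ℝ)| ≤ absInf k := by
    rw [← Int.cast_abs, Int.abs_eq_natAbs]; unfold absInf
    exact_mod_cast h1
  exact max_le (le_max_left _ _) (le_trans h2 (le_max_right _ _))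

lemma absInf_triangle {d : ℕ} (k j : Fin d → ℤ) : absInf k ≤ absInf j + absInf (k - j) := by
  unfold absInf
  have h : (Finset.univ.sup fun v => (k v).natAbs) ≤
      (Finset.univ.sup fun v => (j v).natAbs) + (Finset.univ.sup fun v => ((k - j) v).natAbs) := by
    apply Finset.sup_le
    intro v _
    have hv : (k v) = j v + (k v - j v) := by ring
    calc (k v).natAbs = (j v + (k v - j v)).natAbs := by rw [← hv]
      _ ≤ (j v).natAbs + (k v - j v).natAbs := Int.natAbs_add_le _ _
      _ ≤ _ := by
          apply add_le_add
          · exact Finset.le_sup (f := fun v => (j v).natAbs) (Finset.mem_univ v)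
          · have : ((k - j) v).natAbs = (k v - j v).natAbs := by simp [Pi.sub_apply]
            rw [← this]
            exact Finset.le_sup (f := fun v => ((k - j) v).natAbs) (Finset.mem_univ v)
  exact_mod_cast h

lemma jp_triangle {d : ℕ} (k j : Fin d → ℤ) : jp k ≤ jp j + jp (k - j) := by
  apply max_le
  · have := one_le_jp (k := j)
    have := jp_pos (k := k - j)
    linarith
  · calc absInf k ≤ absInf j + absInf (k - j) := absInf_triangle k j
      _ ≤ jp j + jp (k - j) := add_le_add (le_max_right _ _) (le_max_right _ _)

lemma rpow_two_eq (x : ℝ≥0∞) : x ^ (2:ℝ) = x ^ (2:ℕ) := by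
  rw [← ENNReal.rpow_natCast]; norm_num

lemma my_cs (d : ℕ) (f g : (Fin d → ℤ) → ℝ≥0∞) :
    (∑' i, f i * g i) ^ 2 ≤ (∑' i, f i ^ 2) * (∑' i, g i ^ 2) := by
  have hpq : Real.HolderConjugate 2 2 := (Real.holderConjugate_iff_eq_conjExponent one_lt_two).mpr (by norm_num)
  have h := ENNReal.lintegral_mul_le_Lp_mul_Lq (Measure.count : Measure (Fin d → ℤ))
    hpq (measurable_of_countable f).aemeasurable (measurable_of_countable g).aemeasurable
  rw [lintegral_count, lintegral_count, lintegral_count] at h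
  have h2 : (∑' i, f i * g i) ≤ (∑' i, f i ^ (2:ℝ)) ^ ((1:ℝ)/2) * (∑' i, g i ^ (2:ℝ)) ^ ((1:ℝ)/2) := h
  simp_rw [rpow_two_eq] at h2
  calc (∑' i, f i * g i) ^ 2
      ≤ ((∑' i, f i ^ 2) ^ ((1:ℝ)/2) * (∑' i, g i ^ 2) ^ ((1:ℝ)/2)) ^ 2 := pow_le_pow_left' h2 2
    _ = (∑' i, f i ^ 2) * (∑' i, g i ^ 2) := by
        rw [mul_pow, ← ENNReal.rpow_natCast (_ ^ ((1:ℝ)/2)) 2,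
          ← ENNReal.rpow_natCast (_ ^ ((1:ℝ)/2)) 2, ← ENNReal.rpow_mul, ← ENNReal.rpow_mul]
        norm_num

lemma tsum_shift (d : ℕ) (F : (Fin d → ℤ) → ℝ≥0∞) (j : Fin d → ℤ) :
    ∑' k, F (k - j) = ∑' k, F k := (Equiv.subRight j).tsum_eq F

/-- Core weighted Schur-type estimate. -/
lemma convL (d : ℕ) (U V r : (Fin d → ℤ) → ℝ≥0∞) (hr0 : ∀ j, r j ≠ 0) (hrt : ∀ j, r j ≠ ∞) :
    ∑' k, (∑' j, U j * V (k - j)) ^ 2 ≤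
      (∑' j, (r j)⁻¹) * ((∑' j, (U j) ^ 2 * r j) * (∑' m, (V m) ^ 2)) := by
  set ρ : (Fin d → ℤ) → ℝ≥0∞ := fun j => r j ^ ((1:ℝ)/2) with hρ
  have hρ0 : ∀ j, ρ j ≠ 0 := fun j => by
    simp [hρ, ENNReal.rpow_eq_zero_iff, hr0 j, hrt j]
  have hρt : ∀ j, ρ j ≠ ∞ := fun j => by
    simp [hρ, ENNReal.rpow_eq_top_iff, hr0 j, hrt j]
  have hρsq : ∀ j, ρ j ^ 2 = r j := fun j => by
    rw [hρ, ← ENNReal.rpow_natCast (_ ^ _) 2, ← ENNReal.rpow_mul]; norm_num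
  have key : ∀ k, (∑' j, U j * V (k - j)) ^ 2 ≤
      (∑' j, (r j)⁻¹) * (∑' j, (U j) ^ 2 * r j * (V (k - j)) ^ 2) := by
    intro k
    have e1 : ∀ j, U j * V (k - j) = (ρ j)⁻¹ * (ρ j * U j * V (k - j)) := by
      intro j
      rw [← mul_assoc, ← mul_assoc, ENNReal.inv_mul_cancel (hρ0 j) (hρt j), one_mul]
    calc (∑' j, U j * V (k - j)) ^ 2
        = (∑' j, (ρ j)⁻¹ * (ρ j * U j * V (k - j))) ^ 2 := congrArg (· ^ 2) (tsum_congr e1)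
      _ ≤ (∑' j, ((ρ j)⁻¹) ^ 2) * (∑' j, (ρ j * U j * V (k - j)) ^ 2) := my_cs d _ _
      _ = (∑' j, (r j)⁻¹) * (∑' j, (U j) ^ 2 * r j * (V (k - j)) ^ 2) := by
          congr 1
          · exact tsum_congr fun j => by rw [← ENNReal.inv_pow, hρsq j]
          · exact tsum_congr fun j => by rw [mul_pow, mul_pow, hρsq j]; ring
  calc ∑' k, (∑' j, U j * V (k - j)) ^ 2
      ≤ ∑' k, (∑' j, (r j)⁻¹) * (∑' j, (U j) ^ 2 * r j * (V (k - j)) ^ 2) :=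
        ENNReal.tsum_le_tsum key
    _ = (∑' j, (r j)⁻¹) * ∑' k, ∑' j, (U j) ^ 2 * r j * (V (k - j)) ^ 2 := ENNReal.tsum_mul_left
    _ = (∑' j, (r j)⁻¹) * ∑' j, ∑' k, (U j) ^ 2 * r j * (V (k - j)) ^ 2 := by
        rw [ENNReal.tsum_comm]
    _ = (∑' j, (r j)⁻¹) * ((∑' j, (U j) ^ 2 * r j) * (∑' m, (V m) ^ 2)) := by
        congr 1
        rw [← ENNReal.tsum_mul_right]
        exact tsum_congr fun j => by rw [ENNReal.tsum_mul_left, tsum_shift d (fun m => (V m)^2) j]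

lemma summable_g (p : ℝ) (hp : 1 < p) :
    Summable (fun n : ℤ => (max 1 |(n:ℝ)|) ^ (-p)) := by
  have hp0 : p ≠ 0 := ne_of_gt (lt_trans one_pos hp)
  have hb : Summable (fun n : ℤ => |(n:ℝ)| ^ (-p) + (if n = 0 then (1:ℝ) else 0)) := by
    refine (Real.summable_abs_int_rpow hp).add (summable_of_ne_finset_zero (s := {(0:ℤ)}) ?_)
    intro n hn
    simp only [Finset.mem_singleton] at hn
    simp [hn]
  apply Summable.of_nonneg_of_le
    (fun n => Real.rpow_nonneg (le_of_lt (lt_of_lt_of_le one_pos (le_max_left _ _))) _) _ hb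
  intro n
  by_cases h : n = 0
  · subst h; simp [Real.zero_rpow (neg_ne_zero.mpr hp0)]
  · have h1n : (1:ℝ) ≤ |(n:ℝ)| := by
      rw [← Int.cast_abs]
      exact_mod_cast Int.one_le_abs (by omega)
    rw [max_eq_right h1n]
    simp [h, le_add_of_nonneg_right]

lemma tsum_prod_pow (ge : ℤ → ℝ≥0∞) :
    ∀ m : ℕ, ∑' k : Fin m → ℤ, ∏ v, ge (k v) = (∑' n : ℤ, ge n) ^ m := by
  intro m
  induction m with
  | zero =>
      simp only [Finset.univ_eq_empty, Finset.prod_empty, pow_zero]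
      exact tsum_eq_single (fun v => 0) (fun b hb => absurd (funext fun v => v.elim0) hb)
  | succ m ih =>
      set e : ℤ × (Fin m → ℤ) ≃ (Fin (m+1) → ℤ) := Fin.consEquiv (fun _ => ℤ) with he
      rw [← e.tsum_eq fun k => ∏ v, ge (k v)]
      have hx : ∀ x : ℤ × (Fin m → ℤ), (∏ v, ge ((e x) v)) = ge x.1 * ∏ v : Fin m, ge (x.2 v) := by
        intro x
        rw [Fin.prod_univ_succ]
        simp [he]
      calc ∑' x : ℤ × (Fin m → ℤ), ∏ v, ge ((e x) v)
          = ∑' x : ℤ × (Fin m → ℤ), ge x.1 * ∏ v : Fin m, ge (x.2 v) := tsum_congr hx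
        _ = ∑' n : ℤ, ∑' y : Fin m → ℤ, ge n * ∏ v, ge (y v) := ENNReal.tsum_prod'
        _ = ∑' n : ℤ, ge n * ∑' y : Fin m → ℤ, ∏ v, ge (y v) :=
            tsum_congr fun n => ENNReal.tsum_mul_left
        _ = (∑' n : ℤ, ge n) * ∑' y : Fin m → ℤ, ∏ v, ge (y v) := ENNReal.tsum_mul_right
        _ = (∑' n : ℤ, ge n) ^ (m + 1) := by rw [ih, pow_succ, mul_comm]

lemma summable_jp_rpow {d : ℕ} (hd : 1 ≤ d) {α₀ : ℝ} (hα : (d:ℝ)/2 < α₀) :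
    Summable (fun k : Fin d → ℤ => jp k ^ (-(2*α₀))) := by
  have hd0 : (0:ℝ) < d := by exact_mod_cast hd
  set p : ℝ := 2*α₀/d with hpdef
  have hp : 1 < p := by rw [hpdef]; rw [lt_div_iff₀ hd0]; linarith
  have hdp : (d:ℝ) * p = 2*α₀ := by rw [hpdef]; field_simp
  set g : ℤ → ℝ := fun n => (max 1 |(n:ℝ)|) ^ (-p) with hgdef
  have hg0 : ∀ n, 0 ≤ g n := fun n =>
    Real.rpow_nonneg (le_trans zero_le_one (le_max_left _ _)) _
  have hgsum : Summable g := summable_g p hp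
  set ge : ℤ → ℝ≥0∞ := fun n => ENNReal.ofReal (g n) with hgedef
  have hpt : ∀ k : Fin d → ℤ, jp k ^ (-(2*α₀)) ≤ ∏ v, g (k v) := by
    intro k
    have hprodpos : (0:ℝ) < ∏ v, max 1 |((k v : ℤ):ℝ)| :=
      Finset.prod_pos fun v _ => lt_of_lt_of_le one_pos (le_max_left _ _)
    have hprodle : (∏ v, max 1 |((k v : ℤ):ℝ)|) ≤ jp k ^ (d:ℕ) := by
      calc (∏ v, max 1 |((k v : ℤ):ℝ)|) ≤ ∏ _v : Fin d, jp k :=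
            Finset.prod_le_prod (fun v _ => le_trans zero_le_one (le_max_left _ _))
              (fun v _ => g_le_jp k v)
        _ = jp k ^ (d:ℕ) := by rw [Finset.prod_const, Finset.card_univ, Fintype.card_fin]
    calc jp k ^ (-(2*α₀)) = jp k ^ ((d:ℝ) * (-p)) := by rw [← hdp]; ring_nf
      _ = (jp k ^ (d:ℕ)) ^ (-p) := Real.rpow_natCast_mul (le_of_lt (jp_pos k)) d (-p)
      _ ≤ (∏ v, max 1 |((k v : ℤ):ℝ)|) ^ (-p) :=
          Real.rpow_le_rpow_of_nonpos hprodpos hprodle (by linarith)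
      _ = ∏ v, g (k v) := (Real.finset_prod_rpow Finset.univ
          (fun v => max 1 |((k v : ℤ):ℝ)|)
          (fun v _ => le_trans zero_le_one (le_max_left _ _)) (-p)).symm
  have hfin : (∑' k : Fin d → ℤ, ENNReal.ofReal (jp k ^ (-(2*α₀)))) ≠ ∞ := by
    have hle : (∑' k : Fin d → ℤ, ENNReal.ofReal (jp k ^ (-(2*α₀)))) ≤
        (∑' n : ℤ, ge n) ^ d := by
      rw [← tsum_prod_pow ge d]
      refine ENNReal.tsum_le_tsum fun k => ?_
      calc ENNReal.ofReal (jp k ^ (-(2*α₀))) ≤ ENNReal.ofReal (∏ v, g (k v)) :=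
            ENNReal.ofReal_le_ofReal (hpt k)
        _ = ∏ v, ge (k v) := ENNReal.ofReal_prod_of_nonneg fun v _ => hg0 (k v)
    have hne : (∑' n : ℤ, ge n) ^ d ≠ ∞ := by
      rw [hgedef, ← ENNReal.ofReal_tsum_of_nonneg hg0 hgsum]
      exact ENNReal.pow_ne_top ENNReal.ofReal_ne_top
    exact ne_top_of_le_ne_top hne hle
  have hsum := ENNReal.summable_toReal hfin
  refine hsum.congr fun k => ?_
  rw [ENNReal.toReal_ofReal (Real.rpow_nonneg (le_of_lt (jp_pos k)) _)]

lemma nnreal_sq_add_le (x y : ℝ≥0) : (x + y) ^ 2 ≤ 2 * x ^ 2 + 2 * y ^ 2 := by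
  rw [← NNReal.coe_le_coe]
  push_cast
  nlinarith [sq_nonneg ((x:ℝ) - y)]

lemma ennreal_sq_add_le (x y : ℝ≥0∞) : (x + y) ^ 2 ≤ 2 * x ^ 2 + 2 * y ^ 2 := by
  rcases eq_or_ne x ∞ with hx | hx
  · subst hx
    have h2 : (2:ℝ≥0∞) * ∞ ^ 2 + 2 * y ^ 2 = ∞ := by
      rw [ENNReal.top_pow (by norm_num), ENNReal.mul_top (by norm_num)]; exact top_add _
    rw [h2]; exact le_top
  rcases eq_or_ne y ∞ with hy | hy
  · subst hy
    have h2 : (2:ℝ≥0∞) * x ^ 2 + 2 * ∞ ^ 2 = ∞ := by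
      rw [ENNReal.top_pow (by norm_num), ENNReal.mul_top (by norm_num)]; exact add_top _
    rw [h2]; exact le_top
  lift x to ℝ≥0 using hx
  lift y to ℝ≥0 using hy
  have h := nnreal_sq_add_le x y
  exact_mod_cast h

lemma ofReal_tsum_le {ι : Type*} (f : ι → ℝ) (hf : ∀ i, 0 ≤ f i) :
    ENNReal.ofReal (∑' i, f i) ≤ ∑' i, ENNReal.ofReal (f i) := by
  by_cases h : Summable f
  · rw [ENNReal.ofReal_tsum_of_nonneg hf h]
  · rw [tsum_eq_zero_of_not_summable h]; simp

lemma rpow_two_mul_eq {x : ℝ} (hx : 0 < x) (t : ℝ) : x ^ (2*t) = (x ^ t) ^ 2 := by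
  rw [two_mul, Real.rpow_add hx, sq]


lemma conv_comm (d : ℕ) (f g : (Fin d → ℤ) → ℝ≥0∞) (k : Fin d → ℤ) :
    ∑' j, f j * g (k - j) = ∑' m, g m * f (k - m) := by
  rw [← (Equiv.subLeft k).tsum_eq (fun j => f j * g (k - j))]
  refine tsum_congr fun m => ?_
  simp only [Equiv.subLeft_apply, sub_sub_cancel]
  ring

end helpers

theorem stmt2 (d : ℕ) (hd : 1 ≤ d) (α₀ s : ℝ) (hα : α₀ > (d : ℝ) / 2) (hs : s ≥ α₀)
    (a b : (Fin d → ℤ) → ℝ) (ha0 : ∀ m, 0 ≤ a m) (hb0 : ∀ m, 0 ≤ b m)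
    (ha : Summable fun m : Fin d → ℤ => (a m) ^ 2 * (jp m) ^ (2 * s))
    (hb : Summable fun m : Fin d → ℤ => (b m) ^ 2 * (jp m) ^ (2 * s)) :
    (∑' k : Fin d → ℤ, (∑' j : Fin d → ℤ, a j * b (k - j)) ^ 2 * (jp k) ^ (2 * s)) ≤
      (K0 d α₀ * seqNorm α₀ a * seqNorm s b + K1 d α₀ s * seqNorm s a * seqNorm α₀ b) ^ 2 := by
  classical
  have hα0 : 0 < α₀ := lt_of_le_of_lt (by positivity) hα
  have hs0 : 0 < s := lt_of_lt_of_le hα0 hs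
  set θ : ℝ := (10:ℝ) ^ (-(1/(2*s))) with hθdef
  have hθ0 : 0 < θ := Real.rpow_pos_of_pos (by norm_num) _
  have hθ1 : θ < 1 := Real.rpow_lt_one_of_one_lt_of_neg (by norm_num) (neg_lt_zero.mpr (by positivity))
  have h1θ : (0:ℝ) < 1 - θ := by linarith
  set C : ℝ := (1 - θ) ^ (-s) with hCdef
  have hC0 : 0 ≤ C := Real.rpow_nonneg h1θ.le _
  -- real pointwise estimates
  have hwA : ∀ k j : Fin d → ℤ, θ * jp k ≤ jp (k - j) →
      jp k ^ s ≤ Real.sqrt 10 * jp (k - j) ^ s := by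
    intro k j h
    have h1 : jp k ≤ θ⁻¹ * jp (k - j) := by
      rw [inv_mul_eq_div, le_div_iff₀ hθ0]
      linarith [mul_comm θ (jp k)]
    have hinv : θ⁻¹ = (10:ℝ) ^ ((1:ℝ)/(2*s)) := by
      rw [hθdef, ← Real.rpow_neg (by norm_num), neg_neg]
    calc jp k ^ s ≤ (θ⁻¹ * jp (k - j)) ^ s :=
          Real.rpow_le_rpow (jp_pos k).le h1 hs0.le
      _ = (θ⁻¹) ^ s * jp (k - j) ^ s :=
          Real.mul_rpow (inv_nonneg.mpr hθ0.le) (jp_pos _).le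
      _ = Real.sqrt 10 * jp (k - j) ^ s := by
          congr 1
          rw [hinv, ← Real.rpow_mul (by norm_num : (0:ℝ) ≤ 10)]
          rw [Real.sqrt_eq_rpow]
          congr 1
          field_simp
  have hwB : ∀ k j : Fin d → ℤ, jp (k - j) < θ * jp k → jp k ^ s ≤ C * jp j ^ s := by
    intro k j h
    have htri := jp_triangle k j
    have h2 : (1 - θ) * jp k ≤ jp j := by nlinarith
    have h1 : jp k ≤ (1-θ)⁻¹ * jp j := by
      rw [inv_mul_eq_div, le_div_iff₀ h1θ]
      linarith [mul_comm (1-θ) (jp k)]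
    calc jp k ^ s ≤ ((1-θ)⁻¹ * jp j) ^ s := Real.rpow_le_rpow (jp_pos k).le h1 hs0.le
      _ = ((1-θ)⁻¹) ^ s * jp j ^ s := Real.mul_rpow (inv_nonneg.mpr h1θ.le) (jp_pos _).le
      _ = C * jp j ^ s := by
          congr 1
          rw [hCdef, Real.rpow_neg h1θ.le, ← Real.inv_rpow h1θ.le]
  -- ENNReal sequences
  set A : (Fin d → ℤ) → ℝ≥0∞ := fun m => ENNReal.ofReal (a m) with hA
  set B : (Fin d → ℤ) → ℝ≥0∞ := fun m => ENNReal.ofReal (b m) with hB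
  set ws : (Fin d → ℤ) → ℝ≥0∞ := fun m => ENNReal.ofReal (jp m ^ s) with hws
  set rα : (Fin d → ℤ) → ℝ≥0∞ := fun m => ENNReal.ofReal (jp m ^ (2*α₀)) with hrα
  have hrα0 : ∀ j, rα j ≠ 0 := fun j =>
    ne_of_gt (ENNReal.ofReal_pos.mpr (Real.rpow_pos_of_pos (jp_pos j) _))
  have hrαt : ∀ j, rα j ≠ ∞ := fun j => ENNReal.ofReal_ne_top
  -- real sums
  set Q : ℝ := ∑' k : Fin d → ℤ, jp k ^ (-(2*α₀)) with hQdef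
  have hQsum : Summable (fun k : Fin d → ℤ => jp k ^ (-(2*α₀))) := summable_jp_rpow hd hα
  have hQ0 : 0 ≤ Q := tsum_nonneg fun k => Real.rpow_nonneg (jp_pos k).le _
  set Sas : ℝ := ∑' m : Fin d → ℤ, a m ^ 2 * jp m ^ (2*s) with hSas
  set Sbs : ℝ := ∑' m : Fin d → ℤ, b m ^ 2 * jp m ^ (2*s) with hSbs
  set Saα : ℝ := ∑' m : Fin d → ℤ, a m ^ 2 * jp m ^ (2*α₀) with hSaα
  set Sbα : ℝ := ∑' m : Fin d → ℤ, b m ^ 2 * jp m ^ (2*α₀) with hSbα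
  have hcomp : ∀ m : Fin d → ℤ, jp m ^ (2*α₀) ≤ jp m ^ (2*s) := fun m =>
    Real.rpow_le_rpow_of_exponent_le (one_le_jp m) (by linarith)
  have haα : Summable (fun m : Fin d → ℤ => a m ^ 2 * jp m ^ (2*α₀)) := by
    apply Summable.of_nonneg_of_le
      (fun m => mul_nonneg (sq_nonneg _) (Real.rpow_nonneg (jp_pos m).le _)) _ ha
    exact fun m => mul_le_mul_of_nonneg_left (hcomp m) (sq_nonneg _)
  have hbα : Summable (fun m : Fin d → ℤ => b m ^ 2 * jp m ^ (2*α₀)) := by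
    apply Summable.of_nonneg_of_le
      (fun m => mul_nonneg (sq_nonneg _) (Real.rpow_nonneg (jp_pos m).le _)) _ hb
    exact fun m => mul_le_mul_of_nonneg_left (hcomp m) (sq_nonneg _)
  have hSas0 : 0 ≤ Sas := tsum_nonneg fun m => mul_nonneg (sq_nonneg _) (Real.rpow_nonneg (jp_pos m).le _)
  have hSbs0 : 0 ≤ Sbs := tsum_nonneg fun m => mul_nonneg (sq_nonneg _) (Real.rpow_nonneg (jp_pos m).le _)
  have hSaα0 : 0 ≤ Saα := tsum_nonneg fun m => mul_nonneg (sq_nonneg _) (Real.rpow_nonneg (jp_pos m).le _)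
  have hSbα0 : 0 ≤ Sbα := tsum_nonneg fun m => mul_nonneg (sq_nonneg _) (Real.rpow_nonneg (jp_pos m).le _)
  -- ENNReal norm identities
  have hQe : (∑' j : Fin d → ℤ, (rα j)⁻¹) = ENNReal.ofReal Q := by
    rw [hQdef, ENNReal.ofReal_tsum_of_nonneg (fun k => Real.rpow_nonneg (jp_pos k).le _) hQsum]
    refine tsum_congr fun j => ?_
    rw [hrα, ← ENNReal.ofReal_inv_of_pos (Real.rpow_pos_of_pos (jp_pos j) _),
      ← Real.rpow_neg (jp_pos j).le]
  have hNaα : (∑' j : Fin d → ℤ, (A j) ^ 2 * rα j) = ENNReal.ofReal Saα := by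
    rw [hSaα, ENNReal.ofReal_tsum_of_nonneg
      (fun m => mul_nonneg (sq_nonneg _) (Real.rpow_nonneg (jp_pos m).le _)) haα]
    refine tsum_congr fun j => ?_
    rw [hA, hrα, ← ENNReal.ofReal_pow (ha0 j), ← ENNReal.ofReal_mul (pow_nonneg (ha0 j) 2)]
  have hNbα : (∑' j : Fin d → ℤ, (B j) ^ 2 * rα j) = ENNReal.ofReal Sbα := by
    rw [hSbα, ENNReal.ofReal_tsum_of_nonneg
      (fun m => mul_nonneg (sq_nonneg _) (Real.rpow_nonneg (jp_pos m).le _)) hbα]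
    refine tsum_congr fun j => ?_
    rw [hB, hrα, ← ENNReal.ofReal_pow (hb0 j), ← ENNReal.ofReal_mul (pow_nonneg (hb0 j) 2)]
  have hNbs : (∑' m : Fin d → ℤ, (B m * ws m) ^ 2) = ENNReal.ofReal Sbs := by
    rw [hSbs, ENNReal.ofReal_tsum_of_nonneg
      (fun m => mul_nonneg (sq_nonneg _) (Real.rpow_nonneg (jp_pos m).le _)) hb]
    refine tsum_congr fun m => ?_
    rw [hB, hws, mul_pow, ← ENNReal.ofReal_pow (hb0 m),
      ← ENNReal.ofReal_pow (Real.rpow_nonneg (jp_pos m).le _),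
      ← ENNReal.ofReal_mul (pow_nonneg (hb0 m) 2), rpow_two_mul_eq (jp_pos m) s]
  have hNas : (∑' m : Fin d → ℤ, (A m * ws m) ^ 2) = ENNReal.ofReal Sas := by
    rw [hSas, ENNReal.ofReal_tsum_of_nonneg
      (fun m => mul_nonneg (sq_nonneg _) (Real.rpow_nonneg (jp_pos m).le _)) ha]
    refine tsum_congr fun m => ?_
    rw [hA, hws, mul_pow, ← ENNReal.ofReal_pow (ha0 m),
      ← ENNReal.ofReal_pow (Real.rpow_nonneg (jp_pos m).le _),
      ← ENNReal.ofReal_mul (pow_nonneg (ha0 m) 2), rpow_two_mul_eq (jp_pos m) s]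
  -- ENNReal inner objects
  set SA : (Fin d → ℤ) → ℝ≥0∞ := fun k => ∑' j, A j * (B (k - j) * ws (k - j)) with hSA
  set SB : (Fin d → ℤ) → ℝ≥0∞ := fun k => ∑' j, (A j * ws j) * B (k - j) with hSB
  set c1 : ℝ≥0∞ := ENNReal.ofReal (Real.sqrt 10) with hc1
  set c2 : ℝ≥0∞ := ENNReal.ofReal C with hc2
  set IE : (Fin d → ℤ) → ℝ≥0∞ := fun k => ∑' j, A j * B (k - j) with hIE
  -- splitting estimate
  have hsplit : ∀ k, IE k * ws k ≤ c1 * SA k + c2 * SB k := by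
    intro k
    have h0 : IE k * ws k = ∑' j, A j * B (k - j) * ws k := ENNReal.tsum_mul_right.symm
    rw [h0]
    have hterm : ∀ j, A j * B (k - j) * ws k ≤
        c1 * (A j * (B (k - j) * ws (k - j))) + c2 * ((A j * ws j) * B (k - j)) := by
      intro j
      by_cases hc : θ * jp k ≤ jp (k - j)
      · refine le_trans ?_ (le_add_right le_rfl)
        have hws2 : ws k ≤ c1 * ws (k - j) := by
          rw [hws, hc1, ← ENNReal.ofReal_mul (Real.sqrt_nonneg 10)]
          exact ENNReal.ofReal_le_ofReal (hwA k j hc)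
        calc A j * B (k - j) * ws k ≤ A j * B (k - j) * (c1 * ws (k - j)) :=
              mul_le_mul_right hws2 _
          _ = c1 * (A j * (B (k - j) * ws (k - j))) := by ring
      · push_neg at hc
        refine le_trans ?_ (le_add_left le_rfl)
        have hws2 : ws k ≤ c2 * ws j := by
          rw [hws, hc2, ← ENNReal.ofReal_mul hC0]
          exact ENNReal.ofReal_le_ofReal (hwB k j hc)
        calc A j * B (k - j) * ws k ≤ A j * B (k - j) * (c2 * ws j) :=
              mul_le_mul_right hws2 _
          _ = c2 * ((A j * ws j) * B (k - j)) := by ring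
    calc (∑' j, A j * B (k - j) * ws k)
        ≤ ∑' j, (c1 * (A j * (B (k - j) * ws (k - j))) + c2 * ((A j * ws j) * B (k - j))) :=
          ENNReal.tsum_le_tsum hterm
      _ = c1 * SA k + c2 * SB k := by
          rw [ENNReal.tsum_add, ENNReal.tsum_mul_left, ENNReal.tsum_mul_left]
  -- bound on ∑ SA²
  have hSAb : (∑' k, SA k ^ 2) ≤
      ENNReal.ofReal Q * (ENNReal.ofReal Saα * ENNReal.ofReal Sbs) := by
    have := convL d A (fun m => B m * ws m) rα hrα0 hrαt
    rw [hQe, hNaα, hNbs] at this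
    exact this
  -- bound on ∑ SB²
  have hSBcomm : ∀ k, SB k = ∑' m, B m * ((A (k - m)) * ws (k - m)) := fun k =>
    conv_comm d (fun j => A j * ws j) B k
  have hSBb : (∑' k, SB k ^ 2) ≤
      ENNReal.ofReal Q * (ENNReal.ofReal Sbα * ENNReal.ofReal Sas) := by
    have h := convL d B (fun m => A m * ws m) rα hrα0 hrαt
    rw [hQe, hNbα, hNas] at h
    calc (∑' k, SB k ^ 2) = ∑' k, (∑' m, B m * ((A (k - m)) * ws (k - m))) ^ 2 := by
          exact tsum_congr fun k => by rw [hSBcomm k]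
      _ ≤ _ := h
  -- main ENNReal estimate
  set Sfin : ℝ := 20*Q*(Saα*Sbs) + 2*C^2*Q*(Sbα*Sas) with hSfin
  have hkey : ENNReal.ofReal
      (∑' k : Fin d → ℤ, (∑' j : Fin d → ℤ, a j * b (k - j)) ^ 2 * (jp k) ^ (2 * s)) ≤
      ENNReal.ofReal Sfin := by
    have step1 : ENNReal.ofReal
        (∑' k : Fin d → ℤ, (∑' j : Fin d → ℤ, a j * b (k - j)) ^ 2 * (jp k) ^ (2 * s)) ≤
        ∑' k, (IE k * ws k) ^ 2 := by
      refine le_trans (ofReal_tsum_le _ (fun k =>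
        mul_nonneg (sq_nonneg _) (Real.rpow_nonneg (jp_pos k).le _))) ?_
      refine ENNReal.tsum_le_tsum fun k => ?_
      have hir0 : 0 ≤ ∑' j : Fin d → ℤ, a j * b (k - j) :=
        tsum_nonneg fun j => mul_nonneg (ha0 j) (hb0 _)
      rw [ENNReal.ofReal_mul (sq_nonneg _), rpow_two_mul_eq (jp_pos k) s,
        ENNReal.ofReal_pow hir0, ENNReal.ofReal_pow (Real.rpow_nonneg (jp_pos k).le _),
        ← mul_pow]
      have hinner : ENNReal.ofReal (∑' j : Fin d → ℤ, a j * b (k - j)) ≤ IE k := by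
        refine le_trans (ofReal_tsum_le _ (fun j => mul_nonneg (ha0 j) (hb0 _))) ?_
        refine le_of_eq (tsum_congr fun j => ?_)
        rw [ENNReal.ofReal_mul (ha0 j)]
      exact pow_le_pow_left' (mul_le_mul' hinner le_rfl) 2
    have step2 : (∑' k, (IE k * ws k) ^ 2) ≤
        2 * c1 ^ 2 * (∑' k, SA k ^ 2) + 2 * c2 ^ 2 * (∑' k, SB k ^ 2) := by
      calc (∑' k, (IE k * ws k) ^ 2)
          ≤ ∑' k, (c1 * SA k + c2 * SB k) ^ 2 :=
            ENNReal.tsum_le_tsum fun k => pow_le_pow_left' (hsplit k) 2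
        _ ≤ ∑' k, (2 * (c1 * SA k) ^ 2 + 2 * (c2 * SB k) ^ 2) :=
            ENNReal.tsum_le_tsum fun k => ennreal_sq_add_le _ _
        _ = 2 * c1 ^ 2 * (∑' k, SA k ^ 2) + 2 * c2 ^ 2 * (∑' k, SB k ^ 2) := by
            rw [ENNReal.tsum_add]
            congr 1
            · rw [← ENNReal.tsum_mul_left]
              exact tsum_congr fun k => by rw [mul_pow]; ring
            · rw [← ENNReal.tsum_mul_left]
              exact tsum_congr fun k => by rw [mul_pow]; ring
    have hc1sq : (2:ℝ≥0∞) * c1 ^ 2 = ENNReal.ofReal 20 := by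
      rw [hc1, ← ENNReal.ofReal_pow (Real.sqrt_nonneg 10), Real.sq_sqrt (by norm_num : (0:ℝ) ≤ 10)]
      rw [← ENNReal.ofReal_ofNat 2, ← ENNReal.ofReal_mul (by norm_num : (0:ℝ) ≤ 2)]
      norm_num
    have hc2sq : (2:ℝ≥0∞) * c2 ^ 2 = ENNReal.ofReal (2 * C^2) := by
      rw [hc2, ← ENNReal.ofReal_pow hC0]
      rw [← ENNReal.ofReal_ofNat 2, ← ENNReal.ofReal_mul (by norm_num : (0:ℝ) ≤ 2)]
    have step3 : 2 * c1 ^ 2 * (∑' k, SA k ^ 2) + 2 * c2 ^ 2 * (∑' k, SB k ^ 2) ≤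
        ENNReal.ofReal Sfin := by
      calc 2 * c1 ^ 2 * (∑' k, SA k ^ 2) + 2 * c2 ^ 2 * (∑' k, SB k ^ 2)
          ≤ 2 * c1 ^ 2 * (ENNReal.ofReal Q * (ENNReal.ofReal Saα * ENNReal.ofReal Sbs)) +
            2 * c2 ^ 2 * (ENNReal.ofReal Q * (ENNReal.ofReal Sbα * ENNReal.ofReal Sas)) := by
            exact add_le_add (mul_le_mul' le_rfl hSAb) (mul_le_mul' le_rfl hSBb)
        _ = ENNReal.ofReal Sfin := by
            rw [hc1sq, hc2sq, ← ENNReal.ofReal_mul hSaα0, ← ENNReal.ofReal_mul hQ0,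
              ← ENNReal.ofReal_mul (by norm_num : (0:ℝ) ≤ 20),
              ← ENNReal.ofReal_mul hSbα0, ← ENNReal.ofReal_mul hQ0,
              ← ENNReal.ofReal_mul (by positivity : (0:ℝ) ≤ 2 * C^2),
              ← ENNReal.ofReal_add (by positivity) (by positivity), hSfin]
            congr 1
            ring
    exact le_trans step1 (le_trans step2 step3)
  -- back to reals
  have hSfin0 : 0 ≤ Sfin := by
    rw [hSfin]; positivity
  have hreal : (∑' k : Fin d → ℤ, (∑' j : Fin d → ℤ, a j * b (k - j)) ^ 2 * (jp k) ^ (2 * s)) ≤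
      Sfin := by
    rw [← ENNReal.ofReal_le_ofReal_iff hSfin0]
    exact hkey
  refine le_trans hreal ?_
  -- Sfin ≤ RHS
  have hK0sq : K0 d α₀ ^ 2 = 20 * Q := by
    rw [K0, Real.sq_sqrt (by positivity)]
  have hK1sq : K1 d α₀ s ^ 2 = C^2 * (2 * Q) := by
    rw [K1, mul_pow, Real.sq_sqrt (by positivity)]
  have hna : seqNorm α₀ a ^ 2 = Saα := Real.sq_sqrt hSaα0
  have hnb : seqNorm α₀ b ^ 2 = Sbα := Real.sq_sqrt hSbα0
  have hnas : seqNorm s a ^ 2 = Sas := Real.sq_sqrt hSas0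
  have hnbs : seqNorm s b ^ 2 = Sbs := Real.sq_sqrt hSbs0
  have hK00 : 0 ≤ K0 d α₀ := Real.sqrt_nonneg _
  have hK10 : 0 ≤ K1 d α₀ s := mul_nonneg (Real.rpow_nonneg h1θ.le _) (Real.sqrt_nonneg _)
  have hsn : ∀ (t : ℝ) (c : (Fin d → ℤ) → ℝ), 0 ≤ seqNorm t c := fun t c => Real.sqrt_nonneg _
  have hcross : 0 ≤ 2 * (K0 d α₀ * seqNorm α₀ a * seqNorm s b) * (K1 d α₀ s * seqNorm s a * seqNorm α₀ b) := by
    have := hsn α₀ a; have := hsn s b; have := hsn s a; have := hsn α₀ b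
    positivity
  rw [add_sq]
  have e1 : (K0 d α₀ * seqNorm α₀ a * seqNorm s b) ^ 2 = 20 * Q * (Saα * Sbs) := by
    rw [mul_pow, mul_pow, hK0sq, hna, hnbs]; ring
  have e2 : (K1 d α₀ s * seqNorm s a * seqNorm α₀ b) ^ 2 = 2*C^2*Q*(Sbα*Sas) := by
    rw [mul_pow, mul_pow, hK1sq, hnas, hnb]; ring
  rw [e1, e2, hSfin]
  linarith
end
end

section
/- Fixed-point lemma for the diagonal homological equation: Let Q, Q^{−1} be matrices with finite ‖·‖_{α₀} norm satisfying C₀ ‖Q − I‖_{α₀} ≤ 1/10 and C₀ ‖Q^{−1} − I‖_{α₀} ≤ 1/10 (with C₀ = K₀ + K₁(α₀)). Then for any matrices P, P′ with finite ‖·‖_{α₀} norm, there exists a unique bounded diagonal matrix X such that the main diagonal of Q^{−1}(X + P)Q + P′ is zero; moreover ‖X‖_{α₀} ≤ 2(‖Q^{−1} P Q‖_{α₀} + ‖P′‖_{α₀}). -/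
open scoped BigOperators

noncomputable section

namespace Stmt10Aux

lemma absInf_nonneg {d : ℕ} (k : Fin d → ℤ) : 0 ≤ absInf k := Nat.cast_nonneg _

lemma one_le_jp {d : ℕ} (k : Fin d → ℤ) : 1 ≤ jp k := le_max_left _ _

lemma jp_nonneg {d : ℕ} (k : Fin d → ℤ) : 0 ≤ jp k := zero_le_one.trans (one_le_jp k)

lemma jp_pos {d : ℕ} (k : Fin d → ℤ) : 0 < jp k := lt_of_lt_of_le one_pos (one_le_jp k)

lemma absInf_zero {d : ℕ} : absInf (0 : Fin d → ℤ) = 0 := by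
  simp [absInf]

lemma jp_zero {d : ℕ} : jp (0 : Fin d → ℤ) = 1 := by
  simp [jp, absInf_zero]

lemma absInf_add_le {d : ℕ} (x y : Fin d → ℤ) : absInf (x + y) ≤ absInf x + absInf y := by
  unfold absInf
  rw [← Nat.cast_add, Nat.cast_le]
  refine Finset.sup_le fun v _ => ?_
  calc ((x + y) v).natAbs = (x v + y v).natAbs := rfl
    _ ≤ (x v).natAbs + (y v).natAbs := Int.natAbs_add_le _ _
    _ ≤ _ := add_le_add (Finset.le_sup (f := fun v => (x v).natAbs) (Finset.mem_univ v))
      (Finset.le_sup (f := fun v => (y v).natAbs) (Finset.mem_univ v))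

lemma jp_add_le {d : ℕ} (x y : Fin d → ℤ) : jp (x + y) ≤ jp x + jp y := by
  unfold jp
  refine max_le ?_ ?_
  · calc (1:ℝ) ≤ max 1 (absInf x) := le_max_left _ _
      _ ≤ _ := le_add_of_nonneg_right (le_trans zero_le_one (le_max_left _ _))
  · exact le_trans (absInf_add_le x y) (add_le_add (le_max_right _ _) (le_max_right _ _))

lemma summable_int_weight {q : ℝ} (hq : 1 < q) :
    Summable (fun a : ℤ => (max 1 |(a:ℝ)|) ^ (-q)) := by
  have hg := Real.summable_abs_int_rpow hq
  have hdiff : Summable (fun a : ℤ =>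
      (max 1 |(a:ℝ)|) ^ (-q) - |(a:ℝ)| ^ (-q)) := by
    refine summable_of_ne_finset_zero (s := {0}) fun a ha => ?_
    have ha0 : a ≠ 0 := by simpa using ha
    have h1 : (1:ℝ) ≤ |(a:ℝ)| := by
      have := Int.one_le_abs ha0
      calc (1:ℝ) = ((1:ℤ):ℝ) := by norm_num
        _ ≤ ((|a|:ℤ):ℝ) := by exact_mod_cast this
        _ = |(a:ℝ)| := by push_cast; ring
    rw [max_eq_right h1, sub_self]
  have := hdiff.add hg
  refine this.congr fun a => by ring

lemma jp_cons {d : ℕ} (a : ℤ) (k : Fin d → ℤ) :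
    jp (Fin.cons a k : Fin (d+1) → ℤ) = max (max 1 |(a:ℝ)|) (jp k) := by
  have habs : absInf (Fin.cons a k : Fin (d+1) → ℤ)
      = max ((a.natAbs : ℝ)) (absInf k) := by
    unfold absInf
    rw [Fin.univ_succ]
    rw [Finset.sup_cons, Finset.sup_map]
    push_cast [Nat.cast_max]
    congr 1
  rw [jp, habs, jp]
  rw [Nat.cast_natAbs, Int.cast_abs]
  rcases le_total ((1:ℝ)) (|(a:ℝ)|) with h | h <;>
  rcases le_total ((1:ℝ)) (absInf k) with h' | h' <;>
  · simp [max_assoc, max_comm, max_left_comm]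

lemma summable_jp_rpow : ∀ {d : ℕ} {p : ℝ}, (d:ℝ) < p →
    Summable (fun k : Fin d → ℤ => jp k ^ (-p)) := by
  intro d
  induction d with
  | zero =>
    intro p _
    haveI : Unique (Fin 0 → ℤ) := ⟨⟨fun i => i.elim0⟩, fun f => funext fun i => i.elim0⟩
    exact summable_of_finite_support (Set.toFinite _)
  | succ d ih =>
    intro p hp
    have hd1 : ((d:ℝ) + 1) < p := by push_cast at hp ⊢; linarith
    set q : ℝ := (1 + (p - d))/2 with hq_def
    have hq : 1 < q := by rw [hq_def]; push_cast at hd1; linarith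
    have hr : (d:ℝ) < p - q := by rw [hq_def]; push_cast at hd1 ⊢; linarith
    have hq0 : 0 ≤ q := by linarith
    have hr0 : 0 ≤ p - q := by have := (Nat.cast_nonneg d : (0:ℝ) ≤ d); linarith
    have hZ := summable_int_weight hq
    have hIH := ih hr
    have hprod : Summable (fun ak : ℤ × (Fin d → ℤ) =>
        (max 1 |(ak.1:ℝ)|) ^ (-q) * jp ak.2 ^ (-(p - q))) :=
      hZ.mul_of_nonneg hIH (fun a => Real.rpow_nonneg (le_trans zero_le_one (le_max_left _ _)) _)
        (fun k => Real.rpow_nonneg (jp_nonneg k) _)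
    set e : (ℤ × (Fin d → ℤ)) ≃ (Fin (d+1) → ℤ) := Fin.consEquiv (fun _ => ℤ)
    rw [← e.summable_iff]
    refine Summable.of_nonneg_of_le (fun ak => Real.rpow_nonneg (jp_nonneg _) _) ?_ hprod
    rintro ⟨a, k⟩
    have hjc : jp (e (a, k)) = max (max 1 |(a:ℝ)|) (jp k) := jp_cons a k
    show jp (e (a,k)) ^ (-p) ≤ _
    rw [hjc]
    set X := max (max 1 |(a:ℝ)|) (jp k) with hX
    have hm1 : (1:ℝ) ≤ max 1 |(a:ℝ)| := le_max_left _ _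
    have hX1 : (1:ℝ) ≤ X := le_trans hm1 (le_max_left _ _)
    have hXpos : (0:ℝ) < X := lt_of_lt_of_le one_pos hX1
    have hsplit : X ^ (-p) = X ^ (-q) * X ^ (-(p - q)) := by
      rw [← Real.rpow_add hXpos]; ring_nf
    rw [hsplit]
    have h1 : X ^ (-q) ≤ (max 1 |(a:ℝ)|) ^ (-q) :=
      Real.rpow_le_rpow_of_nonpos (lt_of_lt_of_le one_pos hm1) (le_max_left _ _)
        (neg_nonpos.mpr hq0)
    have h2 : X ^ (-(p - q)) ≤ jp k ^ (-(p - q)) :=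
      Real.rpow_le_rpow_of_nonpos (jp_pos k) (le_max_right _ _) (neg_nonpos.mpr hr0)
    exact mul_le_mul h1 h2 (Real.rpow_nonneg hXpos.le _)
      (Real.rpow_nonneg (le_trans zero_le_one hm1) _)

end Stmt10Aux
namespace Stmt10Aux

variable {d : ℕ}

def shearEquiv (d : ℕ) : ((Fin d → ℤ) × (Fin d → ℤ)) ≃ ((Fin d → ℤ) × (Fin d → ℤ)) where
  toFun p := (p.2, p.1 - p.2)
  invFun x := (x.1 + x.2, x.1)
  left_inv p := by simp
  right_inv x := by simp

/-- Discrete convolution on `ℤ^d`. -/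
def conv (f g : (Fin d → ℤ) → ℝ) (k : Fin d → ℤ) : ℝ := ∑' k', f k' * g (k - k')

section ConvBasics

variable {f g u v : (Fin d → ℤ) → ℝ}

lemma summable_conv_term (hf0 : ∀ k, 0 ≤ f k) (hf1 : Summable f)
    (hg0 : ∀ k, 0 ≤ g k) (hg1 : Summable g) (m : Fin d → ℤ) :
    Summable fun k' => f k' * g (m - k') := by
  refine Summable.of_nonneg_of_le (fun k' => mul_nonneg (hf0 k') (hg0 _))
    (fun k' => ?_) (hf1.mul_right (∑' k, g k))
  exact mul_le_mul_of_nonneg_left (Summable.le_tsum hg1 _ (fun j _ => hg0 j)) (hf0 k')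

lemma conv_nonneg (hf0 : ∀ k, 0 ≤ f k) (hg0 : ∀ k, 0 ≤ g k) (k : Fin d → ℤ) :
    0 ≤ conv f g k :=
  tsum_nonneg fun k' => mul_nonneg (hf0 k') (hg0 _)

lemma summable_mul_shift (hf0 : ∀ k, 0 ≤ f k) (hf1 : Summable f)
    (hg0 : ∀ k, 0 ≤ g k) (hg1 : Summable g) (i j : Fin d → ℤ) :
    Summable fun l => f (i - l) * g (l - j) := by
  have h := summable_conv_term hf0 hf1 hg0 hg1 (i - j)
  refine ((Equiv.subLeft i).summable_iff
    (f := fun l => f (i - l) * g (l - j))).1 ?_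
  refine h.congr fun k' => ?_
  simp only [Function.comp_apply, Equiv.subLeft_apply, sub_sub_cancel]
  rw [sub_right_comm]

lemma tsum_mul_shift (hf0 : ∀ k, 0 ≤ f k) (hf1 : Summable f)
    (hg0 : ∀ k, 0 ≤ g k) (hg1 : Summable g) (i j : Fin d → ℤ) :
    ∑' l, f (i - l) * g (l - j) = conv f g (i - j) := by
  rw [conv]
  rw [← (Equiv.subLeft i).tsum_eq (fun l => f (i - l) * g (l - j))]
  refine tsum_congr fun k' => ?_
  simp only [Equiv.subLeft_apply, sub_sub_cancel]
  rw [sub_right_comm]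

lemma summable_conv (hf0 : ∀ k, 0 ≤ f k) (hf1 : Summable f)
    (hg0 : ∀ k, 0 ≤ g k) (hg1 : Summable g) :
    Summable (conv f g) := by
  have hprod : Summable (fun x : (Fin d → ℤ) × (Fin d → ℤ) => f x.1 * g x.2) :=
    hf1.mul_of_nonneg hg1 hf0 hg0
  have huncurry : Summable (fun p : (Fin d → ℤ) × (Fin d → ℤ) => f p.2 * g (p.1 - p.2)) := by
    exact ((shearEquiv d).summable_iff
      (f := fun x : (Fin d → ℤ) × (Fin d → ℤ) => f x.1 * g x.2)).2 hprod
  exact huncurry.prod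

lemma conv_comm (hf0 : ∀ k, 0 ≤ f k) (hg0 : ∀ k, 0 ≤ g k) (k : Fin d → ℤ) :
    conv f g k = conv g f k := by
  rw [conv, conv]
  rw [← (Equiv.subLeft k).tsum_eq (fun l => g l * f (k - l))]
  refine tsum_congr fun k' => ?_
  simp only [Equiv.subLeft_apply, sub_sub_cancel]
  ring

lemma tsum_mul_le_sqrt (hu0 : ∀ k, 0 ≤ u k) (hv0 : ∀ k, 0 ≤ v k)
    (hu : Summable fun k => u k ^ 2) (hv : Summable fun k => v k ^ 2) :
    ∑' k, u k * v k ≤ Real.sqrt (∑' k, u k ^ 2) * Real.sqrt (∑' k, v k ^ 2) := by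
  have huv : Summable fun k => u k * v k := by
    refine Summable.of_nonneg_of_le (fun k => mul_nonneg (hu0 k) (hv0 k))
      (fun k => ?_) ((hu.add hv).div_const 2)
    have := sq_nonneg (u k - v k); nlinarith
  refine Summable.tsum_le_of_sum_le huv fun s => ?_
  have hcs := Finset.sum_mul_sq_le_sq_mul_sq s u v
  have h1 : ∑ i ∈ s, u i * v i ≤ Real.sqrt ((∑ i ∈ s, u i ^ 2) * ∑ i ∈ s, v i ^ 2) := by
    rw [show (∑ i ∈ s, u i * v i) = Real.sqrt ((∑ i ∈ s, u i * v i)^2) from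
      (Real.sqrt_sq (Finset.sum_nonneg fun i _ => mul_nonneg (hu0 i) (hv0 i))).symm]
    exact Real.sqrt_le_sqrt hcs
  refine h1.trans ?_
  rw [Real.sqrt_mul (Finset.sum_nonneg fun i _ => sq_nonneg _)]
  refine mul_le_mul (Real.sqrt_le_sqrt ?_) (Real.sqrt_le_sqrt ?_)
    (Real.sqrt_nonneg _) (Real.sqrt_nonneg _)
  · exact Summable.sum_le_tsum s (fun i _ => sq_nonneg _) hu
  · exact Summable.sum_le_tsum s (fun i _ => sq_nonneg _) hv

lemma conv_sq_le (hu0 : ∀ k, 0 ≤ u k) (hv0 : ∀ k, 0 ≤ v k)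
    (hu2 : Summable fun k => u k ^ 2) (hv1 : Summable v) (k : Fin d → ℤ) :
    conv u v k ^ 2 ≤ (∑' k', v k') * conv (fun k' => u k' ^ 2) v k := by
  have hvs : Summable fun k' => v (k - k') :=
    ((Equiv.subLeft k).summable_iff (f := v)).2 hv1 |>.congr fun k' => by
      simp [Equiv.subLeft_apply]
  set a : (Fin d → ℤ) → ℝ := fun k' => Real.sqrt (v (k - k')) with ha
  set b : (Fin d → ℤ) → ℝ := fun k' => u k' * Real.sqrt (v (k - k')) with hb
  have hab : ∀ k', u k' * v (k - k') = a k' * b k' := by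
    intro k'
    rw [ha, hb]
    simp only []
    rw [show Real.sqrt (v (k-k')) * (u k' * Real.sqrt (v (k-k'))) =
      u k' * (Real.sqrt (v (k-k')) * Real.sqrt (v (k-k'))) from by ring,
      Real.mul_self_sqrt (hv0 _)]
  have ha2 : Summable fun k' => a k' ^ 2 := by
    refine hvs.congr fun k' => ?_
    rw [ha]; simp only []; rw [sq, Real.mul_self_sqrt (hv0 _)]
  have hb2 : Summable fun k' => b k' ^ 2 := by
    have : ∀ k', b k' ^ 2 = u k' ^ 2 * v (k - k') := by
      intro k'; rw [hb]; simp only []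
      rw [mul_pow, sq (Real.sqrt _), Real.mul_self_sqrt (hv0 _)]
    refine Summable.of_nonneg_of_le (fun k' => sq_nonneg _) (fun k' => ?_)
      (hu2.mul_right (∑' k', v k'))
    rw [this k']
    exact mul_le_mul_of_nonneg_left (Summable.le_tsum hv1 _ (fun j _ => hv0 j)) (sq_nonneg _)
  have hconv : conv u v k = ∑' k', a k' * b k' := by
    rw [conv]; exact tsum_congr hab
  have hcs := tsum_mul_le_sqrt (fun k' => Real.sqrt_nonneg _)
    (fun k' => mul_nonneg (hu0 k') (Real.sqrt_nonneg _)) ha2 hb2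
  have hta : ∑' k', a k' ^ 2 = ∑' k', v k' := by
    rw [← (Equiv.subLeft k).tsum_eq v]
    refine tsum_congr fun k' => ?_
    rw [ha]; simp only [Equiv.subLeft_apply]
    rw [sq, Real.mul_self_sqrt (hv0 _)]
  have htb : ∑' k', b k' ^ 2 = conv (fun k' => u k' ^ 2) v k := by
    rw [conv]
    refine tsum_congr fun k' => ?_
    rw [hb]; simp only []
    rw [mul_pow, sq (Real.sqrt _), Real.mul_self_sqrt (hv0 _)]
  rw [hconv]
  calc (∑' k', a k' * b k') ^ 2
      ≤ (Real.sqrt (∑' k', a k' ^ 2) * Real.sqrt (∑' k', b k' ^ 2)) ^ 2 := by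
        refine pow_le_pow_left₀ (tsum_nonneg fun k' =>
          mul_nonneg (Real.sqrt_nonneg _) (mul_nonneg (hu0 k') (Real.sqrt_nonneg _))) hcs 2
    _ = (∑' k', a k' ^ 2) * (∑' k', b k' ^ 2) := by
        rw [mul_pow, Real.sq_sqrt (tsum_nonneg fun k' => sq_nonneg _),
          Real.sq_sqrt (tsum_nonneg fun k' => sq_nonneg _)]
    _ = (∑' k', v k') * conv (fun k' => u k' ^ 2) v k := by rw [hta, htb]

lemma summable_conv_sq (hu0 : ∀ k, 0 ≤ u k) (hv0 : ∀ k, 0 ≤ v k)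
    (hu2 : Summable fun k => u k ^ 2) (hv1 : Summable v) :
    Summable fun k => conv u v k ^ 2 := by
  have hc : Summable (conv (fun k' => u k' ^ 2) v) :=
    summable_conv (fun k' => sq_nonneg _) hu2 hv0 hv1
  refine Summable.of_nonneg_of_le (fun k => sq_nonneg _)
    (fun k => conv_sq_le hu0 hv0 hu2 hv1 k) (hc.mul_left _)

end ConvBasics

end Stmt10Aux
namespace Stmt10Aux

variable {d : ℕ} {α₀ : ℝ} {f g : (Fin d → ℤ) → ℝ}

lemma sq_weight (k : Fin d → ℤ) : jp k ^ (2*α₀) = (jp k ^ α₀)^2 := by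
  rw [two_mul, Real.rpow_add (jp_pos k), sq]

lemma one_le_weight (hα0 : 0 ≤ α₀) (k : Fin d → ℤ) : 1 ≤ jp k ^ (2*α₀) :=
  Real.one_le_rpow (one_le_jp k) (by linarith)

lemma weight_nonneg (k : Fin d → ℤ) : 0 ≤ (jp k ^ (2*α₀) : ℝ) :=
  Real.rpow_nonneg (jp_nonneg k) _

lemma jp_rpow_le (hα0 : 0 ≤ α₀) (k k' : Fin d → ℤ) :
    jp k ^ α₀ ≤ 2^α₀ * (jp k' ^ α₀ + jp (k - k') ^ α₀) := by
  have h1 : jp k ≤ jp k' + jp (k - k') := by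
    have := jp_add_le k' (k - k')
    simpa using this
  have h2 : jp k ≤ 2 * max (jp k') (jp (k - k')) := by
    rcases le_total (jp k') (jp (k - k')) with h | h
    · rw [max_eq_right h]; linarith
    · rw [max_eq_left h]; linarith
  calc jp k ^ α₀ ≤ (2 * max (jp k') (jp (k - k'))) ^ α₀ :=
        Real.rpow_le_rpow (jp_nonneg k) h2 hα0
    _ = 2^α₀ * (max (jp k') (jp (k - k'))) ^ α₀ :=
        Real.mul_rpow (by norm_num) (le_trans (jp_nonneg k') (le_max_left _ _))
    _ ≤ 2^α₀ * (jp k' ^ α₀ + jp (k - k') ^ α₀) := by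
        refine mul_le_mul_of_nonneg_left ?_ (Real.rpow_nonneg (by norm_num) _)
        rcases max_cases (jp k') (jp (k - k')) with ⟨h, _⟩ | ⟨h, _⟩ <;> rw [h]
        · exact le_add_of_nonneg_right (Real.rpow_nonneg (jp_nonneg _) _)
        · exact le_add_of_nonneg_left (Real.rpow_nonneg (jp_nonneg _) _)

lemma summable_sq_of (hg0 : ∀ k, 0 ≤ g k) (hg1 : Summable g) :
    Summable fun k => g k ^ 2 := by
  refine Summable.of_nonneg_of_le (fun k => sq_nonneg _) (fun k => ?_)
    (hg1.mul_right (∑' k, g k))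
  rw [sq]
  exact mul_le_mul_of_nonneg_left (Summable.le_tsum hg1 _ (fun j _ => hg0 j)) (hg0 k)

lemma summable_mul_of_sq {u v : (Fin d → ℤ) → ℝ}
    (hu2 : Summable fun k => u k ^ 2) (hv2 : Summable fun k => v k ^ 2)
    (hu0 : ∀ k, 0 ≤ u k) (hv0 : ∀ k, 0 ≤ v k) :
    Summable fun k => u k * v k := by
  refine Summable.of_nonneg_of_le (fun k => mul_nonneg (hu0 k) (hv0 k)) (fun k => ?_)
    ((hu2.add hv2).div_const 2)
  have := sq_nonneg (u k - v k); nlinarith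

lemma conv_weighted_le (hα0 : 0 ≤ α₀)
    (hf0 : ∀ k, 0 ≤ f k) (hf1 : Summable f)
    (hf2 : Summable fun k => f k ^ 2 * jp k ^ (2*α₀))
    (hg0 : ∀ k, 0 ≤ g k) (hg1 : Summable g)
    (hg2 : Summable fun k => g k ^ 2 * jp k ^ (2*α₀)) (k : Fin d → ℤ) :
    conv f g k * jp k ^ α₀ ≤
      2^α₀ * (conv (fun k' => f k' * jp k' ^ α₀) g k
        + conv f (fun k' => g k' * jp k' ^ α₀) k) := by
  set F : (Fin d → ℤ) → ℝ := fun k' => f k' * jp k' ^ α₀ with hF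
  set G : (Fin d → ℤ) → ℝ := fun k' => g k' * jp k' ^ α₀ with hG
  have hF0 : ∀ k', 0 ≤ F k' := fun k' => mul_nonneg (hf0 k') (Real.rpow_nonneg (jp_nonneg _) _)
  have hG0 : ∀ k', 0 ≤ G k' := fun k' => mul_nonneg (hg0 k') (Real.rpow_nonneg (jp_nonneg _) _)
  have hF2 : Summable fun k' => F k' ^ 2 := by
    refine hf2.congr fun k' => ?_
    rw [hF]; simp only []; rw [mul_pow, ← sq_weight]
  have hG2 : Summable fun k' => G k' ^ 2 := by
    refine hg2.congr fun k' => ?_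
    rw [hG]; simp only []; rw [mul_pow, ← sq_weight]
  have hfsq : Summable fun k' => f k' ^ 2 :=
    Summable.of_nonneg_of_le (fun k' => sq_nonneg _)
      (fun k' => le_mul_of_one_le_right (sq_nonneg _) (one_le_weight hα0 k')) hf2
  have hgsq : Summable fun k' => g k' ^ 2 :=
    Summable.of_nonneg_of_le (fun k' => sq_nonneg _)
      (fun k' => le_mul_of_one_le_right (sq_nonneg _) (one_le_weight hα0 k')) hg2
  have hgshift_sq : Summable fun k' => g (k - k') ^ 2 := by
    refine (((Equiv.subLeft k).summable_iff).2 hgsq).congr fun k' => by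
      simp [Equiv.subLeft_apply]
  have hGshift_sq : Summable fun k' => G (k - k') ^ 2 := by
    refine (((Equiv.subLeft k).summable_iff).2 hG2).congr fun k' => by
      simp [Equiv.subLeft_apply]
  have hFg : Summable fun k' => F k' * g (k - k') :=
    summable_mul_of_sq hF2 hgshift_sq hF0 (fun k' => hg0 _)
  have hfG : Summable fun k' => f k' * G (k - k') :=
    summable_mul_of_sq hfsq hGshift_sq hf0 (fun k' => hG0 _)
  have hterm : Summable fun k' => f k' * g (k - k') :=
    summable_conv_term hf0 hf1 hg0 hg1 k
  have hbound : ∀ k', f k' * g (k - k') * jp k ^ α₀ ≤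
      2^α₀ * (F k' * g (k - k') + f k' * G (k - k')) := by
    intro k'
    have h := jp_rpow_le hα0 k k'
    have h2 := mul_le_mul_of_nonneg_left h (mul_nonneg (hf0 k') (hg0 (k - k')))
    calc f k' * g (k - k') * jp k ^ α₀
        = f k' * g (k - k') * jp k ^ α₀ := rfl
      _ ≤ f k' * g (k - k') * (2^α₀ * (jp k' ^ α₀ + jp (k - k') ^ α₀)) := h2
      _ = 2^α₀ * (F k' * g (k - k') + f k' * G (k - k')) := by rw [hF, hG]; ring
  calc conv f g k * jp k ^ α₀ = ∑' k', f k' * g (k - k') * jp k ^ α₀ := by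
        rw [conv, tsum_mul_right]
    _ ≤ ∑' k', 2^α₀ * (F k' * g (k - k') + f k' * G (k - k')) :=
        Summable.tsum_le_tsum hbound (hterm.mul_right _) (((hFg.add hfG).mul_left _))
    _ = 2^α₀ * (conv F g k + conv f G k) := by
        rw [tsum_mul_left, conv, conv, Summable.tsum_add hFg hfG]

lemma conv_good (hα0 : 0 ≤ α₀)
    (hf0 : ∀ k, 0 ≤ f k) (hf1 : Summable f)
    (hf2 : Summable fun k => f k ^ 2 * jp k ^ (2*α₀))
    (hg0 : ∀ k, 0 ≤ g k) (hg1 : Summable g)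
    (hg2 : Summable fun k => g k ^ 2 * jp k ^ (2*α₀)) :
    Summable fun k => conv f g k ^ 2 * jp k ^ (2*α₀) := by
  set F : (Fin d → ℤ) → ℝ := fun k' => f k' * jp k' ^ α₀ with hF
  set G : (Fin d → ℤ) → ℝ := fun k' => g k' * jp k' ^ α₀ with hG
  have hF0 : ∀ k', 0 ≤ F k' := fun k' => mul_nonneg (hf0 k') (Real.rpow_nonneg (jp_nonneg _) _)
  have hG0 : ∀ k', 0 ≤ G k' := fun k' => mul_nonneg (hg0 k') (Real.rpow_nonneg (jp_nonneg _) _)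
  have hF2 : Summable fun k' => F k' ^ 2 := by
    refine hf2.congr fun k' => ?_
    rw [hF]; simp only []; rw [mul_pow, ← sq_weight]
  have hG2 : Summable fun k' => G k' ^ 2 := by
    refine hg2.congr fun k' => ?_
    rw [hG]; simp only []; rw [mul_pow, ← sq_weight]
  have hc1 : Summable fun k => conv F g k ^ 2 :=
    summable_conv_sq hF0 hg0 hF2 hg1
  have hc2 : Summable fun k => conv f G k ^ 2 := by
    refine (summable_conv_sq hG0 hf0 hG2 hf1).congr fun k => ?_
    rw [conv_comm hG0 hf0 k]
  have hmaj : Summable fun k =>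
      (2^α₀:ℝ)^2 * (2 * conv F g k ^ 2 + 2 * conv f G k ^ 2) :=
    (((hc1.mul_left 2).add (hc2.mul_left 2)).mul_left _)
  refine Summable.of_nonneg_of_le
    (fun k => mul_nonneg (sq_nonneg _) (weight_nonneg k)) (fun k => ?_) hmaj
  have hcw := conv_weighted_le hα0 hf0 hf1 hf2 hg0 hg1 hg2 k
  have hc0 : 0 ≤ conv f g k := conv_nonneg hf0 hg0 k
  have h1 : conv f g k ^ 2 * jp k ^ (2*α₀) = (conv f g k * jp k ^ α₀)^2 := by
    rw [mul_pow, ← sq_weight]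
  rw [h1]
  have h2 : (conv f g k * jp k ^ α₀)^2 ≤ (2^α₀ * (conv F g k + conv f G k))^2 :=
    pow_le_pow_left₀ (mul_nonneg hc0 (Real.rpow_nonneg (jp_nonneg _) _)) hcw 2
  refine h2.trans ?_
  have hc1' : 0 ≤ conv F g k := conv_nonneg hF0 hg0 k
  have hc2' : 0 ≤ conv f G k := conv_nonneg hf0 hG0 k
  rw [mul_pow]
  refine mul_le_mul_of_nonneg_left ?_ (sq_nonneg _)
  nlinarith [sq_nonneg (conv F g k - conv f G k)]

end Stmt10Aux
namespace Stmt10Aux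

variable {d : ℕ} {α₀ : ℝ} {A B : Mat d}

lemma diagNorm_nonneg (A : Mat d) (k : Fin d → ℤ) : 0 ≤ diagNorm A k :=
  Real.iSup_nonneg fun i => abs_nonneg _

lemma abs_le_diagNorm (hA : ∀ k, BddAbove (Set.range fun i => |A i (i - k)|))
    (i j : Fin d → ℤ) : |A i j| ≤ diagNorm A (i - j) := by
  have h := le_ciSup (hA (i - j)) i
  simp only [sub_sub_cancel] at h
  exact h

lemma diagNorm_le_of {k : Fin d → ℤ} {c : ℝ} (h : ∀ i, |A i (i - k)| ≤ c) :
    diagNorm A k ≤ c :=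
  ciSup_le h

lemma snorm_nonneg (s : ℝ) (A : Mat d) : 0 ≤ SNorm s A := Real.sqrt_nonneg _

lemma snorm_sq_eq (s : ℝ) (A : Mat d) :
    SNorm s A ^ 2 = ∑' k, diagNorm A k ^ 2 * jp k ^ (2*s) :=
  Real.sq_sqrt (tsum_nonneg fun k => mul_nonneg (sq_nonneg _)
    (Real.rpow_nonneg (jp_nonneg _) _))

lemma summable_diagNorm_sq (hα0 : 0 ≤ α₀) (hA : MemS α₀ A) :
    Summable fun k => diagNorm A k ^ 2 :=
  Summable.of_nonneg_of_le (fun k => sq_nonneg _)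
    (fun k => le_mul_of_one_le_right (sq_nonneg _) (one_le_weight hα0 k)) hA.2

lemma tsum_diagNorm_sq_le (hα0 : 0 ≤ α₀) (hA : MemS α₀ A) :
    ∑' k, diagNorm A k ^ 2 ≤ SNorm α₀ A ^ 2 := by
  rw [snorm_sq_eq]
  exact Summable.tsum_le_tsum
    (fun k => le_mul_of_one_le_right (sq_nonneg _) (one_le_weight hα0 k))
    (summable_diagNorm_sq hα0 hA) hA.2

lemma diagNorm_le_snorm (hα0 : 0 ≤ α₀) (hA : MemS α₀ A) (k : Fin d → ℤ) :
    diagNorm A k ≤ SNorm α₀ A := by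
  have h1 : diagNorm A k ^ 2 ≤ SNorm α₀ A ^ 2 := by
    calc diagNorm A k ^ 2
        ≤ diagNorm A k ^ 2 * jp k ^ (2*α₀) :=
          le_mul_of_one_le_right (sq_nonneg _) (one_le_weight hα0 k)
      _ ≤ ∑' k, diagNorm A k ^ 2 * jp k ^ (2*α₀) :=
          Summable.le_tsum hA.2 k (fun j _ => mul_nonneg (sq_nonneg _) (weight_nonneg j))
      _ = SNorm α₀ A ^ 2 := (snorm_sq_eq α₀ A).symm
  have := abs_le_of_sq_le_sq h1 (snorm_nonneg α₀ A)
  rwa [abs_of_nonneg (diagNorm_nonneg A k)] at this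

lemma summable_diagNorm (h2α : (d:ℝ) < 2*α₀) (hα0 : 0 ≤ α₀) (hA : MemS α₀ A) :
    Summable (diagNorm A) := by
  have hw := summable_jp_rpow h2α
  refine Summable.of_nonneg_of_le (diagNorm_nonneg A) (fun k => ?_) ((hA.2.add hw).div_const 2)
  set x := diagNorm A k with hx
  have hx0 : 0 ≤ x := diagNorm_nonneg A k
  set u := jp k ^ α₀ with hu
  have hu1 : 1 ≤ u := Real.one_le_rpow (one_le_jp k) hα0
  have hu0 : 0 < u := lt_of_lt_of_le one_pos hu1
  have huu : u * u⁻¹ = 1 := mul_inv_cancel₀ (ne_of_gt hu0)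
  have hw2 : jp k ^ (2*α₀) = u^2 := sq_weight k
  have hwinv : jp k ^ (-(2*α₀)) = (u^2)⁻¹ := by
    rw [← hw2, Real.rpow_neg (jp_nonneg k)]
  rw [hw2, hwinv]
  have key : 2 * x ≤ x^2 * u^2 + (u^2)⁻¹ := by
    have h := sq_nonneg (x * u - u⁻¹)
    have hinv : (u^2)⁻¹ = u⁻¹ * u⁻¹ := by rw [sq, mul_inv]
    nlinarith [sq_nonneg (x*u - u⁻¹)]
  linarith

lemma entry_mul_summable (hA : MemS α₀ A) (hB : MemS α₀ B)
    (h2α : (d:ℝ) < 2*α₀) (hα0 : 0 ≤ α₀) (i j : Fin d → ℤ) :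
    Summable fun l => A i l * B l j := by
  refine Summable.of_abs ?_
  refine Summable.of_nonneg_of_le (fun l => abs_nonneg _) (fun l => ?_)
    (summable_mul_shift (diagNorm_nonneg A) (summable_diagNorm h2α hα0 hA)
      (diagNorm_nonneg B) (summable_diagNorm h2α hα0 hB) i j)
  rw [abs_mul]
  exact mul_le_mul (abs_le_diagNorm hA.1 i l) (abs_le_diagNorm hB.1 l j)
    (abs_nonneg _) (diagNorm_nonneg A _)

lemma abs_matMul_le (hA : MemS α₀ A) (hB : MemS α₀ B)
    (h2α : (d:ℝ) < 2*α₀) (hα0 : 0 ≤ α₀) (i j : Fin d → ℤ) :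
    |matMul A B i j| ≤ conv (diagNorm A) (diagNorm B) (i - j) := by
  have hdA := summable_diagNorm h2α hα0 hA
  have hdB := summable_diagNorm h2α hα0 hB
  have habs : Summable fun l => |A i l * B l j| := by
    refine Summable.of_nonneg_of_le (fun l => abs_nonneg _) (fun l => ?_)
      (summable_mul_shift (diagNorm_nonneg A) hdA (diagNorm_nonneg B) hdB i j)
    rw [abs_mul]
    exact mul_le_mul (abs_le_diagNorm hA.1 i l) (abs_le_diagNorm hB.1 l j)
      (abs_nonneg _) (diagNorm_nonneg A _)
  calc |matMul A B i j| = |∑' l, A i l * B l j| := rfl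
    _ ≤ ∑' l, |A i l * B l j| := by
        have h2 : Summable fun l => ‖A i l * B l j‖ := by
          simpa only [Real.norm_eq_abs] using habs
        have h3 := norm_tsum_le_tsum_norm h2
        simpa only [Real.norm_eq_abs] using h3
    _ ≤ ∑' l, diagNorm A (i - l) * diagNorm B (l - j) := by
        refine Summable.tsum_le_tsum (fun l => ?_) habs
          (summable_mul_shift (diagNorm_nonneg A) hdA (diagNorm_nonneg B) hdB i j)
        rw [abs_mul]
        exact mul_le_mul (abs_le_diagNorm hA.1 i l) (abs_le_diagNorm hB.1 l j)
          (abs_nonneg _) (diagNorm_nonneg A _)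
    _ = conv (diagNorm A) (diagNorm B) (i - j) :=
        tsum_mul_shift (diagNorm_nonneg A) hdA (diagNorm_nonneg B) hdB i j

lemma diagNorm_matMul_le (hA : MemS α₀ A) (hB : MemS α₀ B)
    (h2α : (d:ℝ) < 2*α₀) (hα0 : 0 ≤ α₀) (k : Fin d → ℤ) :
    diagNorm (matMul A B) k ≤ conv (diagNorm A) (diagNorm B) k := by
  refine diagNorm_le_of fun i => ?_
  have := abs_matMul_le hA hB h2α hα0 i (i - k)
  simpa [sub_sub_cancel] using this

lemma memS_matMul (hA : MemS α₀ A) (hB : MemS α₀ B)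
    (h2α : (d:ℝ) < 2*α₀) (hα0 : 0 ≤ α₀) : MemS α₀ (matMul A B) := by
  have hdA := summable_diagNorm h2α hα0 hA
  have hdB := summable_diagNorm h2α hα0 hB
  constructor
  · intro k
    refine ⟨conv (diagNorm A) (diagNorm B) k, ?_⟩
    rintro x ⟨i, rfl⟩
    have := abs_matMul_le hA hB h2α hα0 i (i - k)
    simpa [sub_sub_cancel] using this
  · refine Summable.of_nonneg_of_le
      (fun k => mul_nonneg (sq_nonneg _) (weight_nonneg k)) (fun k => ?_)
      (conv_good hα0 (diagNorm_nonneg A) hdA hA.2 (diagNorm_nonneg B) hdB hB.2)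
    refine mul_le_mul_of_nonneg_right ?_ (weight_nonneg k)
    exact pow_le_pow_left₀ (diagNorm_nonneg _ _) (diagNorm_matMul_le hA hB h2α hα0 k) 2

lemma summable_of_eq_except {f g : (Fin d → ℤ) → ℝ} (hg : Summable g)
    (k₀ : Fin d → ℤ) (h : ∀ k, k ≠ k₀ → f k = g k) : Summable f := by
  have hdiff : Summable fun k => f k - g k := by
    refine summable_of_ne_finset_zero (s := {k₀}) fun k hk => ?_
    rw [h k (by simpa using hk), sub_self]
  exact (hdiff.add hg).congr fun k => by ring

lemma memS_sub_id (hA : MemS α₀ A) : MemS α₀ (A - idMat) := by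
  constructor
  · intro k
    refine ⟨diagNorm A k + 1, ?_⟩
    rintro x ⟨i, rfl⟩
    have h1 : |A i (i - k)| ≤ diagNorm A k := by
      have := abs_le_diagNorm hA.1 i (i - k)
      simpa [sub_sub_cancel] using this
    have : |((A - idMat : Mat d)) i (i - k)| ≤ |A i (i - k)| + |idMat i (i - k)| := by
      have : ((A - idMat : Mat d)) i (i - k) = A i (i - k) - idMat i (i - k) := rfl
      rw [this]; exact abs_sub _ _
    refine this.trans ?_
    have : |idMat i (i - k)| ≤ 1 := by
      rw [idMat]; split <;> simp
    linarith
  · refine summable_of_eq_except hA.2 0 fun k hk => ?_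
    have hent : ∀ i, ((A - idMat : Mat d)) i (i - k) = A i (i - k) := by
      intro i
      have hne : i ≠ i - k := by
        intro h
        apply hk
        have := congrArg (fun x => i - x) h
        simpa using (sub_eq_self.mp h.symm)
      have : idMat i (i - k) = 0 := by rw [idMat]; simp [hne]
      show A i (i - k) - idMat i (i - k) = A i (i - k)
      rw [this, sub_zero]
    have : diagNorm ((A - idMat : Mat d)) k = diagNorm A k := by
      rw [diagNorm, diagNorm]
      exact iSup_congr fun i => by rw [hent i]
    rw [this]

end Stmt10Aux
namespace Stmt10Aux

variable {d : ℕ} {α₀ : ℝ}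

lemma S_summable (h2α : (d:ℝ) < 2*α₀) (hα0 : 0 ≤ α₀)
    {Qi Q : Mat d} (hQi : MemS α₀ Qi) (hQ : MemS α₀ Q)
    (z : (Fin d → ℤ) → ℝ) (M : ℝ) (hz : ∀ l, |z l| ≤ M) (i : Fin d → ℤ) :
    Summable fun l => Qi i l * z l * Q l i := by
  have hdQi := summable_diagNorm h2α hα0 hQi
  have hdQ := summable_diagNorm h2α hα0 hQ
  refine Summable.of_abs ?_
  refine Summable.of_nonneg_of_le (fun l => abs_nonneg _) (fun l => ?_)
    ((summable_mul_shift (diagNorm_nonneg Qi) hdQi (diagNorm_nonneg Q) hdQ i i).mul_right M)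
  rw [abs_mul, abs_mul]
  calc |Qi i l| * |z l| * |Q l i|
      ≤ diagNorm Qi (i - l) * M * diagNorm Q (l - i) := by
        refine mul_le_mul ?_ (abs_le_diagNorm hQ.1 l i) (abs_nonneg _) ?_
        · exact mul_le_mul (abs_le_diagNorm hQi.1 i l) (hz l) (abs_nonneg _)
            (diagNorm_nonneg Qi _)
        · exact mul_nonneg (diagNorm_nonneg Qi _) (le_trans (abs_nonneg _) (hz l))
    _ = diagNorm Qi (i - l) * diagNorm Q (l - i) * M := by ring

lemma S_estimate (h2α : (d:ℝ) < 2*α₀) (hα0 : 0 ≤ α₀)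
    {Qi Q : Mat d} (hQi : MemS α₀ Qi) (hQ : MemS α₀ Q)
    (z : (Fin d → ℤ) → ℝ) (M : ℝ) (hz : ∀ l, |z l| ≤ M) (i : Fin d → ℤ) :
    |(∑' l, Qi i l * z l * Q l i) - z i| ≤
      (SNorm α₀ (Qi - idMat) + SNorm α₀ (Q - idMat)
        + (SNorm α₀ (Qi - idMat)^2 + SNorm α₀ (Q - idMat)^2)/2) * M := by
  set A : Mat d := Qi - idMat with hAdef
  set B : Mat d := Q - idMat with hBdef
  have hA : MemS α₀ A := memS_sub_id hQi
  have hB : MemS α₀ B := memS_sub_id hQ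
  have hM0 : 0 ≤ M := le_trans (abs_nonneg _) (hz i)
  have hdA := summable_diagNorm h2α hα0 hA
  have hdB := summable_diagNorm h2α hα0 hB
  set a := SNorm α₀ A with ha
  set b := SNorm α₀ B with hb
  have ha0 : 0 ≤ a := snorm_nonneg _ _
  have hb0 : 0 ≤ b := snorm_nonneg _ _
  -- pieces
  set t1 : (Fin d → ℤ) → ℝ := fun l => A i l * z l * B l i with ht1
  set t2 : (Fin d → ℤ) → ℝ := fun l => A i l * z l * idMat l i with ht2
  set t3 : (Fin d → ℤ) → ℝ := fun l => idMat i l * z l * B l i with ht3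
  set t4 : (Fin d → ℤ) → ℝ := fun l => idMat i l * z l * idMat l i with ht4
  have hsplit : ∀ l, Qi i l * z l * Q l i = t1 l + t2 l + t3 l + t4 l := by
    intro l
    have e1 : A i l = Qi i l - idMat i l := rfl
    have e2 : B l i = Q l i - idMat l i := rfl
    rw [ht1, ht2, ht3, ht4]
    simp only [e1, e2]
    ring
  have ht1bound : ∀ l, |t1 l| ≤ diagNorm A (i - l) * diagNorm B (l - i) * M := by
    intro l
    rw [ht1]
    simp only []
    rw [abs_mul, abs_mul]
    calc |A i l| * |z l| * |B l i|
        ≤ diagNorm A (i - l) * M * diagNorm B (l - i) := by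
          refine mul_le_mul ?_ (abs_le_diagNorm hB.1 l i) (abs_nonneg _) ?_
          · exact mul_le_mul (abs_le_diagNorm hA.1 i l) (hz l) (abs_nonneg _)
              (diagNorm_nonneg A _)
          · exact mul_nonneg (diagNorm_nonneg A _) (le_trans (abs_nonneg _) (hz l))
      _ = diagNorm A (i - l) * diagNorm B (l - i) * M := by ring
  have hmaj : Summable fun l => diagNorm A (i - l) * diagNorm B (l - i) * M :=
    (summable_mul_shift (diagNorm_nonneg A) hdA (diagNorm_nonneg B) hdB i i).mul_right M
  have ht1s : Summable t1 := by
    refine Summable.of_abs (Summable.of_nonneg_of_le (fun l => abs_nonneg _) ht1bound hmaj)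
  have ht2s : Summable t2 := by
    refine summable_of_ne_finset_zero (s := {i}) fun l hl => ?_
    have : idMat l i = 0 := by rw [idMat]; simp [show l ≠ i by simpa using hl]
    rw [ht2]; simp only []; rw [this, mul_zero]
  have ht3s : Summable t3 := by
    refine summable_of_ne_finset_zero (s := {i}) fun l hl => ?_
    have hne : i ≠ l := fun h => (by simpa using hl : l ≠ i) h.symm
    have : idMat i l = 0 := by rw [idMat]; simp [hne]
    rw [ht3]; simp only []; rw [this, zero_mul, zero_mul]
  have ht4s : Summable t4 := by
    refine summable_of_ne_finset_zero (s := {i}) fun l hl => ?_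
    have : idMat l i = 0 := by rw [idMat]; simp [show l ≠ i by simpa using hl]
    rw [ht4]; simp only []; rw [this, mul_zero]
  have htsum2 : ∑' l, t2 l = A i i * z i := by
    rw [tsum_eq_single i]
    · rw [ht2]; simp only []; rw [idMat]; simp
    · intro l hl
      have : idMat l i = 0 := by rw [idMat]; simp [hl]
      rw [ht2]; simp only []; rw [this, mul_zero]
  have htsum3 : ∑' l, t3 l = z i * B i i := by
    rw [tsum_eq_single i]
    · rw [ht3]; simp only []; rw [idMat]; simp
    · intro l hl
      have hne : i ≠ l := fun h => hl h.symm
      have : idMat i l = 0 := by rw [idMat]; simp [hne]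
      rw [ht3]; simp only []; rw [this, zero_mul, zero_mul]
  have htsum4 : ∑' l, t4 l = z i := by
    rw [tsum_eq_single i]
    · rw [ht4]; simp only []; rw [idMat]; simp
    · intro l hl
      have : idMat l i = 0 := by rw [idMat]; simp [hl]
      rw [ht4]; simp only []; rw [this, mul_zero]
  have htot : (∑' l, Qi i l * z l * Q l i)
      = (∑' l, t1 l) + A i i * z i + z i * B i i + z i := by
    calc (∑' l, Qi i l * z l * Q l i) = ∑' l, (t1 l + t2 l + t3 l + t4 l) :=
          tsum_congr hsplit
      _ = (∑' l, (t1 l + t2 l + t3 l)) + ∑' l, t4 l :=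
          Summable.tsum_add ((ht1s.add ht2s).add ht3s) ht4s
      _ = (∑' l, (t1 l + t2 l)) + (∑' l, t3 l) + ∑' l, t4 l := by
          rw [Summable.tsum_add (ht1s.add ht2s) ht3s]
      _ = (∑' l, t1 l) + (∑' l, t2 l) + (∑' l, t3 l) + ∑' l, t4 l := by
          rw [Summable.tsum_add ht1s ht2s]
      _ = _ := by rw [htsum2, htsum3, htsum4]
  -- bound |∑ t1|
  have habs_t1 : |∑' l, t1 l| ≤ conv (diagNorm A) (diagNorm B) 0 * M := by
    have h1 : |∑' l, t1 l| ≤ ∑' l, |t1 l| := by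
      have h2 : Summable fun l => ‖t1 l‖ := by
        simpa only [Real.norm_eq_abs] using
          (Summable.of_nonneg_of_le (fun l => abs_nonneg _) ht1bound hmaj)
      simpa only [Real.norm_eq_abs] using norm_tsum_le_tsum_norm h2
    refine h1.trans ?_
    have h3 : ∑' l, |t1 l| ≤ ∑' l, diagNorm A (i - l) * diagNorm B (l - i) * M :=
      Summable.tsum_le_tsum ht1bound
        (Summable.of_nonneg_of_le (fun l => abs_nonneg _) ht1bound hmaj) hmaj
    refine h3.trans ?_
    rw [tsum_mul_right, tsum_mul_shift (diagNorm_nonneg A) hdA (diagNorm_nonneg B) hdB i i,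
      sub_self]
  -- conv at 0 bounded by (a^2+b^2)/2
  have hconv0 : conv (diagNorm A) (diagNorm B) 0 ≤ (a^2 + b^2)/2 := by
    have hsqA := summable_diagNorm_sq hα0 hA
    have hsqB := summable_diagNorm_sq hα0 hB
    have hsqBneg : Summable fun k' => diagNorm B (-k') ^ 2 := by
      refine (((Equiv.neg (Fin d → ℤ)).summable_iff).2 hsqB).congr fun k' => by
        simp [Equiv.neg_apply]
    have hterm := summable_conv_term (diagNorm_nonneg A) hdA (diagNorm_nonneg B) hdB
      (0 : Fin d → ℤ)
    have h1 : conv (diagNorm A) (diagNorm B) 0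
        ≤ ∑' k', (diagNorm A k' ^ 2 / 2 + diagNorm B (-k') ^ 2 / 2) := by
      rw [conv]
      refine Summable.tsum_le_tsum (fun k' => ?_) hterm
        ((hsqA.div_const 2).add (hsqBneg.div_const 2))
      rw [zero_sub]
      nlinarith [sq_nonneg (diagNorm A k' - diagNorm B (-k')), diagNorm_nonneg A k',
        diagNorm_nonneg B (-k')]
    refine h1.trans ?_
    rw [Summable.tsum_add (hsqA.div_const 2) (hsqBneg.div_const 2), tsum_div_const, tsum_div_const]
    have h2 : ∑' k', diagNorm B (-k') ^ 2 = ∑' k', diagNorm B k' ^ 2 := by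
      rw [← ((Equiv.neg (Fin d → ℤ)).tsum_eq (fun k' => diagNorm B k' ^ 2))]
      exact tsum_congr fun k' => by simp [Equiv.neg_apply]
    rw [h2]
    have h3 := tsum_diagNorm_sq_le hα0 hA
    have h4 := tsum_diagNorm_sq_le hα0 hB
    rw [← ha, ← hb] at *
    linarith
  have hAii : |A i i| ≤ a := by
    have h := abs_le_diagNorm hA.1 i i
    rw [sub_self] at h
    exact h.trans (diagNorm_le_snorm hα0 hA 0)
  have hBii : |B i i| ≤ b := by
    have h := abs_le_diagNorm hB.1 i i
    rw [sub_self] at h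
    exact h.trans (diagNorm_le_snorm hα0 hB 0)
  rw [htot]
  have e1 : (∑' l, t1 l) + A i i * z i + z i * B i i + z i - z i
      = (∑' l, t1 l) + A i i * z i + z i * B i i := by ring
  rw [e1]
  have h5 : |(∑' l, t1 l) + A i i * z i + z i * B i i|
      ≤ |∑' l, t1 l| + |A i i * z i| + |z i * B i i| := by
    calc |(∑' l, t1 l) + A i i * z i + z i * B i i|
        ≤ |(∑' l, t1 l) + A i i * z i| + |z i * B i i| := abs_add_le _ _
      _ ≤ |∑' l, t1 l| + |A i i * z i| + |z i * B i i| :=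
          add_le_add (abs_add_le _ _) le_rfl
  refine h5.trans ?_
  have h6 : |A i i * z i| ≤ a * M := by
    rw [abs_mul]; exact mul_le_mul hAii (hz i) (abs_nonneg _) ha0
  have h7 : |z i * B i i| ≤ b * M := by
    rw [abs_mul, mul_comm]
    exact mul_le_mul hBii (hz i) (abs_nonneg _) hb0
  have h8 : conv (diagNorm A) (diagNorm B) 0 * M ≤ (a^2+b^2)/2 * M :=
    mul_le_mul_of_nonneg_right hconv0 hM0
  have := habs_t1.trans h8
  nlinarith [this, h6, h7]

lemma matMul_diag_expand (h2α : (d:ℝ) < 2*α₀) (hα0 : 0 ≤ α₀)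
    {Qi Q P : Mat d} (hQi : MemS α₀ Qi) (hQ : MemS α₀ Q) (hP : MemS α₀ P)
    (y : (Fin d → ℤ) → ℝ) (M : ℝ) (hy : ∀ l, |y l| ≤ M) (i : Fin d → ℤ) :
    matMul (matMul Qi ((fun l m => if l = m then y l else 0) + P)) Q i i
      = (∑' l, Qi i l * y l * Q l i) + matMul (matMul Qi P) Q i i := by
  set Y : Mat d := fun l m => if l = m then y l else 0 with hY
  have hQiP : MemS α₀ (matMul Qi P) := memS_matMul hQi hP h2α hα0
  have h1 : ∀ i' j, matMul Qi ((Y + P : Mat d)) i' j = Qi i' j * y j + matMul Qi P i' j := by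
    intro i' j
    have s1 : Summable fun l => Qi i' l * Y l j := by
      refine summable_of_ne_finset_zero (s := {j}) fun l hl => ?_
      have : Y l j = 0 := by rw [hY]; simp [show l ≠ j by simpa using hl]
      rw [this, mul_zero]
    have s2 : Summable fun l => Qi i' l * P l j := entry_mul_summable hQi hP h2α hα0 i' j
    calc matMul Qi ((Y + P : Mat d)) i' j
        = ∑' l, Qi i' l * ((Y + P : Mat d) l j) := rfl
      _ = ∑' l, (Qi i' l * Y l j + Qi i' l * P l j) := by
          refine tsum_congr fun l => ?_
          have h : (Y + P : Mat d) l j = Y l j + P l j := rfl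
          rw [h, mul_add]
      _ = (∑' l, Qi i' l * Y l j) + ∑' l, Qi i' l * P l j := Summable.tsum_add s1 s2
      _ = Qi i' j * y j + matMul Qi P i' j := by
          congr 1
          rw [tsum_eq_single j]
          · rw [hY]; simp
          · intro l hl
            have : Y l j = 0 := by rw [hY]; simp [hl]
            rw [this, mul_zero]
  have hS : Summable fun l => Qi i l * y l * Q l i := S_summable h2α hα0 hQi hQ y M hy i
  have hPQ : Summable fun l => matMul Qi P i l * Q l i :=
    entry_mul_summable hQiP hQ h2α hα0 i i
  calc matMul (matMul Qi ((Y + P : Mat d))) Q i i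
      = ∑' l, (Qi i l * y l * Q l i + matMul Qi P i l * Q l i) := by
        refine tsum_congr fun l => ?_
        show matMul Qi ((Y + P : Mat d)) i l * Q l i = _
        rw [h1 i l]; ring
    _ = (∑' l, Qi i l * y l * Q l i) + ∑' l, matMul Qi P i l * Q l i := Summable.tsum_add hS hPQ
    _ = (∑' l, Qi i l * y l * Q l i) + matMul (matMul Qi P) Q i i := rfl

end Stmt10Aux
namespace Stmt10Aux

variable {d : ℕ} {α₀ : ℝ}

lemma snorm_diag_le (hα0 : 0 ≤ α₀) (y : (Fin d → ℤ) → ℝ) (c : ℝ) (hc : 0 ≤ c)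
    (hy : ∀ i, |y i| ≤ c) :
    SNorm α₀ (fun l m => if l = m then y l else 0) ≤ c := by
  set X : Mat d := fun l m => if l = m then y l else 0 with hX
  have hdk : ∀ k : Fin d → ℤ, k ≠ 0 → diagNorm X k = 0 := by
    intro k hk
    have hent : ∀ i, |X i (i - k)| = 0 := by
      intro i
      have hne : i ≠ i - k := by
        intro h
        exact hk (by simpa using (sub_eq_self.mp h.symm))
      rw [hX]; simp [hne]
    rw [diagNorm]
    have : (fun i : Fin d → ℤ => |X i (i - k)|) = fun _ => (0:ℝ) := funext hent
    rw [this]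
    exact ciSup_const
  have hd0 : diagNorm X 0 ≤ c := by
    refine diagNorm_le_of fun i => ?_
    rw [hX]; simp only [sub_zero, if_pos rfl]
    exact hy i
  have htsum : ∑' k, diagNorm X k ^ 2 * jp k ^ (2*α₀) = diagNorm X 0 ^ 2 := by
    rw [tsum_eq_single 0]
    · rw [jp_zero, Real.one_rpow, mul_one]
    · intro k hk
      rw [hdk k hk]
      ring
  rw [SNorm, htsum, Real.sqrt_sq (diagNorm_nonneg X 0)]
  exact hd0

lemma C0_ge (h2α : (d:ℝ) < 2*α₀) (hα0 : 0 < α₀) : (4:ℝ) ≤ C0 d α₀ := by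
  have hT : Summable (fun k : Fin d → ℤ => jp k ^ (-(2 * α₀))) := summable_jp_rpow h2α
  have hT1 : (1:ℝ) ≤ ∑' k : Fin d → ℤ, jp k ^ (-(2 * α₀)) := by
    have h := Summable.le_tsum hT 0 (fun j _ => Real.rpow_nonneg (jp_nonneg j) _)
    rwa [jp_zero, Real.one_rpow] at h
  have hK0 : (4:ℝ) ≤ K0 d α₀ := by
    rw [K0]
    rw [show (4:ℝ) = Real.sqrt 16 by
      rw [show (16:ℝ) = 4^2 by norm_num, Real.sqrt_sq (by norm_num : (0:ℝ) ≤ 4)]]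
    exact Real.sqrt_le_sqrt (by linarith)
  have hK1 : 0 ≤ K1 d α₀ α₀ := by
    rw [K1]
    refine mul_nonneg (Real.rpow_nonneg ?_ _) (Real.sqrt_nonneg _)
    have : (10:ℝ) ^ (-(1 / (2 * α₀))) ≤ 1 :=
      Real.rpow_le_one_of_one_le_of_nonpos (by norm_num)
        (neg_nonpos.mpr (by positivity))
    linarith
  rw [C0]
  linarith

end Stmt10Aux
open scoped BoundedContinuousFunction NNReal in
open Stmt10Aux in
theorem stmt10 (d : ℕ) (α₀ : ℝ) (hα : α₀ > (d : ℝ) / 2)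
    (Q Qi P P' : Mat d)
    (hQ1 : matMul Q Qi = idMat) (hQ2 : matMul Qi Q = idMat)
    (hQmem : MemS α₀ Q) (hQimem : MemS α₀ Qi) (hPmem : MemS α₀ P) (hP'mem : MemS α₀ P')
    (hb1 : C0 d α₀ * SNorm α₀ (Q - idMat) ≤ 1 / 10)
    (hb2 : C0 d α₀ * SNorm α₀ (Qi - idMat) ≤ 1 / 10) :
    ∃ X : Mat d,
      (∀ i j : Fin d → ℤ, i ≠ j → X i j = 0) ∧
      BddAbove (Set.range fun i => |X i i|) ∧
      (∀ i : Fin d → ℤ, (matMul (matMul Qi (X + P)) Q) i i + P' i i = 0) ∧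
      SNorm α₀ X ≤ 2 * (SNorm α₀ (matMul (matMul Qi P) Q) + SNorm α₀ P') ∧
      (∀ X' : Mat d,
        (∀ i j : Fin d → ℤ, i ≠ j → X' i j = 0) →
        BddAbove (Set.range fun i => |X' i i|) →
        (∀ i : Fin d → ℤ, (matMul (matMul Qi (X' + P)) Q) i i + P' i i = 0) →
        X' = X) := by
  classical
  have hα0 : 0 < α₀ := lt_of_le_of_lt (by positivity) hα
  have hα0' : 0 ≤ α₀ := hα0.le
  have h2α : (d:ℝ) < 2*α₀ := by
    have : (d:ℝ)/2 < α₀ := hα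
    linarith
  have hC0 : (4:ℝ) ≤ C0 d α₀ := C0_ge h2α hα0
  set a := SNorm α₀ (Qi - idMat) with hadef
  set b := SNorm α₀ (Q - idMat) with hbdef
  have ha0 : 0 ≤ a := snorm_nonneg _ _
  have hb0 : 0 ≤ b := snorm_nonneg _ _
  have ha40 : a ≤ 1/40 := by nlinarith
  have hb40 : b ≤ 1/40 := by nlinarith
  set ε := a + b + (a^2 + b^2)/2 with hεdef
  have hε0 : 0 ≤ ε := by positivity
  have hεhalf : ε ≤ 1/2 := by nlinarith
  have hQiPmem : MemS α₀ (matMul Qi P) := memS_matMul hQimem hPmem h2α hα0'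
  have hMmem : MemS α₀ (matMul (matMul Qi P) Q) := memS_matMul hQiPmem hQmem h2α hα0'
  set g := SNorm α₀ (matMul (matMul Qi P) Q) + SNorm α₀ P' with hgdef
  have hg0 : 0 ≤ g := add_nonneg (snorm_nonneg _ _) (snorm_nonneg _ _)
  set Gf : (Fin d → ℤ) → ℝ := fun i => matMul (matMul Qi P) Q i i + P' i i with hGfdef
  have hGb : ∀ i, |Gf i| ≤ g := by
    intro i
    have h1 : |matMul (matMul Qi P) Q i i| ≤ SNorm α₀ (matMul (matMul Qi P) Q) := by
      have h := abs_le_diagNorm hMmem.1 i i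
      rw [sub_self] at h
      exact h.trans (diagNorm_le_snorm hα0' hMmem 0)
    have h2 : |P' i i| ≤ SNorm α₀ P' := by
      have h := abs_le_diagNorm hP'mem.1 i i
      rw [sub_self] at h
      exact h.trans (diagNorm_le_snorm hα0' hP'mem 0)
    calc |Gf i| ≤ |matMul (matMul Qi P) Q i i| + |P' i i| := abs_add_le _ _
      _ ≤ g := by rw [hgdef]; exact add_le_add h1 h2
  set Sf : ((Fin d → ℤ) → ℝ) → (Fin d → ℤ) → ℝ := fun z i => ∑' l, Qi i l * z l * Q l i
    with hSfdef
  have hkey : ∀ (z : (Fin d → ℤ) → ℝ) (M : ℝ), (∀ l, |z l| ≤ M) →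
      ∀ i, |Sf z i - z i| ≤ ε * M := by
    intro z M hz i
    have h := S_estimate h2α hα0' hQimem hQmem z M hz i
    rw [← hadef, ← hbdef] at h
    calc |Sf z i - z i| = |(∑' l, Qi i l * z l * Q l i) - z i| := rfl
      _ ≤ (a + b + (a^2 + b^2)/2) * M := h
      _ = ε * M := by rw [hεdef]
  have hSsum : ∀ (z : (Fin d → ℤ) → ℝ) (M : ℝ), (∀ l, |z l| ≤ M) →
      ∀ i, Summable fun l => Qi i l * z l * Q l i :=
    fun z M hz i => S_summable h2α hα0' hQimem hQmem z M hz i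
  -- the contraction on bounded functions
  set T : ((Fin d → ℤ) →ᵇ ℝ) → ((Fin d → ℤ) →ᵇ ℝ) := fun x =>
    BoundedContinuousFunction.ofNormedAddCommGroupDiscrete
      (fun i => x i - Sf (⇑x) i - Gf i) (ε * ‖x‖ + g) (by
        intro i
        have hz : ∀ l, |x l| ≤ ‖x‖ := fun l => by
          simpa [Real.norm_eq_abs] using x.norm_coe_le_norm l
        have h1 := hkey (⇑x) ‖x‖ hz i
        rw [Real.norm_eq_abs]
        calc |x i - Sf (⇑x) i - Gf i| ≤ |x i - Sf (⇑x) i| + |Gf i| := abs_sub _ _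
          _ ≤ ε * ‖x‖ + g := by
              rw [abs_sub_comm]
              exact add_le_add h1 (hGb i)) with hTdef
  have hTapp : ∀ (x : (Fin d → ℤ) →ᵇ ℝ) (i : Fin d → ℤ),
      T x i = x i - Sf (⇑x) i - Gf i := fun x i => rfl
  have hTlip : ∀ x y : (Fin d → ℤ) →ᵇ ℝ, dist (T x) (T y) ≤ (1/2 : ℝ) * dist x y := by
    intro x y
    rw [BoundedContinuousFunction.dist_le (by positivity)]
    intro i
    have hz : ∀ l, |x l - y l| ≤ dist x y := by
      intro l
      have h := BoundedContinuousFunction.norm_coe_le_norm (x - y) l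
      rw [dist_eq_norm]
      simpa [Real.norm_eq_abs] using h
    have hxb : ∀ l, |x l| ≤ ‖x‖ := fun l => by
      simpa [Real.norm_eq_abs] using x.norm_coe_le_norm l
    have hyb : ∀ l, |y l| ≤ ‖y‖ := fun l => by
      simpa [Real.norm_eq_abs] using y.norm_coe_le_norm l
    have hSsub : Sf (⇑x) i - Sf (⇑y) i = Sf (fun l => x l - y l) i := by
      show (∑' l, Qi i l * x l * Q l i) - (∑' l, Qi i l * y l * Q l i) = _
      rw [← Summable.tsum_sub (hSsum (⇑x) ‖x‖ hxb i) (hSsum (⇑y) ‖y‖ hyb i)]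
      exact tsum_congr fun l => by ring
    have h1 := hkey (fun l => x l - y l) (dist x y) hz i
    rw [Real.dist_eq, hTapp x i, hTapp y i]
    have e : (x i - Sf (⇑x) i - Gf i) - (y i - Sf (⇑y) i - Gf i)
        = (fun l => x l - y l) i - Sf (fun l => x l - y l) i := by
      simp only []
      rw [← hSsub]
      ring
    rw [e, abs_sub_comm]
    exact h1.trans (mul_le_mul_of_nonneg_right hεhalf dist_nonneg)
  have hcontr : ContractingWith (1/2 : ℝ≥0) T := by
    refine ⟨by rw [← NNReal.coe_lt_coe]; norm_num, LipschitzWith.of_dist_le_mul fun x y => ?_⟩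
    have := hTlip x y
    calc dist (T x) (T y) ≤ (1/2 : ℝ) * dist x y := this
      _ = ((1/2 : ℝ≥0) : ℝ) * dist x y := by norm_num
  set x₀ : (Fin d → ℤ) →ᵇ ℝ := ContractingWith.fixedPoint T hcontr with hx₀def
  have hfix : T x₀ = x₀ := hcontr.fixedPoint_isFixedPt
  have hx₀b : ∀ l, |x₀ l| ≤ ‖x₀‖ := fun l => by
    simpa [Real.norm_eq_abs] using x₀.norm_coe_le_norm l
  have hfixi : ∀ i, Sf (⇑x₀) i = -Gf i := by
    intro i
    have h := DFunLike.congr_fun hfix i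
    rw [hTapp x₀ i] at h
    linarith
  have hxnorm : ‖x₀‖ ≤ 2*g := by
    have h : ∀ i, |x₀ i| ≤ ε*‖x₀‖ + g := by
      intro i
      have h1 : |Sf (⇑x₀) i - x₀ i| ≤ ε * ‖x₀‖ := hkey (⇑x₀) ‖x₀‖ hx₀b i
      have h2 : |Sf (⇑x₀) i| ≤ g := by rw [hfixi i, abs_neg]; exact hGb i
      calc |x₀ i| = |(x₀ i - Sf (⇑x₀) i) + Sf (⇑x₀) i| := by ring_nf
        _ ≤ |x₀ i - Sf (⇑x₀) i| + |Sf (⇑x₀) i| := abs_add_le _ _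
        _ ≤ ε*‖x₀‖ + g := by rw [abs_sub_comm]; exact add_le_add h1 h2
    have hn : ‖x₀‖ ≤ ε*‖x₀‖ + g := by
      refine (BoundedContinuousFunction.norm_le (by positivity)).2 fun i => ?_
      rw [Real.norm_eq_abs]
      exact h i
    have h3 : ε * ‖x₀‖ ≤ (1/2) * ‖x₀‖ := mul_le_mul_of_nonneg_right hεhalf (norm_nonneg x₀)
    have h4 : ‖x₀‖ ≤ 1/2 * ‖x₀‖ + g := le_trans hn (by linarith [h3])
    have h5 : (0:ℝ) ≤ ‖x₀‖ := norm_nonneg x₀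
    linarith
  -- the solution
  refine ⟨fun l m => if l = m then x₀ l else 0, ?_, ?_, ?_, ?_, ?_⟩
  · intro i j hij
    simp [hij]
  · refine ⟨‖x₀‖, ?_⟩
    rintro r ⟨i, rfl⟩
    simp only [if_pos rfl]
    exact hx₀b i
  · intro i
    have hexp := matMul_diag_expand h2α hα0' hQimem hQmem hPmem (fun l => x₀ l) ‖x₀‖ hx₀b i
    rw [hexp]
    have h := hfixi i
    rw [hGfdef] at h
    simp only [] at h
    calc (∑' l, Qi i l * x₀ l * Q l i) + matMul (matMul Qi P) Q i i + P' i i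
        = Sf (⇑x₀) i + (matMul (matMul Qi P) Q i i + P' i i) := by
          rw [hSfdef]; ring
      _ = 0 := by rw [hfixi i, hGfdef]; ring
  · have hbound : ∀ i, |x₀ i| ≤ 2*g := fun i => (hx₀b i).trans hxnorm
    have h := snorm_diag_le hα0' (fun l => x₀ l) (2*g) (by positivity) hbound
    calc SNorm α₀ (fun l m => if l = m then x₀ l else 0) ≤ 2*g := h
      _ = 2 * (SNorm α₀ (matMul (matMul Qi P) Q) + SNorm α₀ P') := by rw [hgdef]
  · intro X' hdiag hbdd heq'
    obtain ⟨M, hM⟩ := hbdd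
    have hM' : ∀ i, |X' i i| ≤ M := fun i => hM ⟨i, rfl⟩
    set x' : (Fin d → ℤ) →ᵇ ℝ := BoundedContinuousFunction.ofNormedAddCommGroupDiscrete
      (fun i => X' i i) M (fun i => by simpa [Real.norm_eq_abs] using hM' i) with hx'def
    have hX'form : X' = fun l m => if l = m then X' l l else 0 := by
      funext l m
      by_cases h : l = m
      · subst h; simp
      · simp [h, hdiag l m h]
    have hS' : ∀ i, Sf (fun l => X' l l) i = -Gf i := by
      intro i
      have h := heq' i
      rw [hX'form] at h
      rw [matMul_diag_expand h2α hα0' hQimem hQmem hPmem (fun l => X' l l) M hM' i] at h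
      rw [hSfdef, hGfdef]
      simp only []
      linarith
    have hfix' : Function.IsFixedPt T x' := by
      refine BoundedContinuousFunction.ext fun i => ?_
      rw [hTapp x' i]
      have hcoe : ⇑x' = fun i => X' i i := rfl
      rw [hcoe]
      have := hS' i
      linarith
    have hx'eq : x' = x₀ := hcontr.fixedPoint_unique hfix'
    funext i j
    by_cases h : i = j
    · subst h
      have h1 : X' i i = x' i := rfl
      have h2 : x' i = x₀ i := DFunLike.congr_fun hx'eq i
      rw [if_pos rfl, h1, h2]
    · simp only [h, if_false]
      exact hdiag i j h
end
end

section
/- Distal property of the Maryland-type sequence: Let ω ∈ ℝ^d satisfy the Diophantine condition ‖i·ω‖_{ℝ/ℤ} ≥ γ |i|_∞^{−τ} for all i ∈ ℤ^d \ {0}, and let d_i = tan(π i·ω), assuming i·ω ∉ ℤ + 1/2 for all i. Then |tan(πx) − tan(πy)| ≥ π ‖x−y‖_{ℝ/ℤ} for all x, y where both tangents are defined, and consequently |d_i − d_j| ≥ π γ |i−j|_∞^{−τ} for all i ≠ j in ℤ^d. -/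
open scoped BigOperators

noncomputable section

/-- distance to the nearest integer. -/
def distZ (x : ℝ) : ℝ := ⨅ k : ℤ, |x - (k : ℝ)|

def dotProd {d : ℕ} (i : Fin d → ℤ) (ω : Fin d → ℝ) : ℝ := ∑ v : Fin d, (i v : ℝ) * ω v


lemma distZ_nonneg (x : ℝ) : 0 ≤ distZ x :=
  le_ciInf fun _ => abs_nonneg _

lemma distZ_le (x : ℝ) (k : ℤ) : distZ x ≤ |x - k| :=
  ciInf_le ⟨0, by rintro y ⟨k, rfl⟩; exact abs_nonneg _⟩ k

lemma not_half (x : ℝ) (h : Real.cos (Real.pi * x) ≠ 0) (n : ℤ) : x ≠ n + 1/2 := by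
  intro hx
  apply h
  rw [Real.cos_eq_zero_iff]
  exact ⟨n, by rw [hx]; ring⟩

lemma frac_lt (x : ℝ) (h : Real.cos (Real.pi * x) ≠ 0) : |x - round x| < 1/2 := by
  rcases lt_or_eq_of_le (abs_sub_round x) with h' | h'
  · exact h'
  · exfalso
    rcases (abs_eq (by norm_num : (0:ℝ) ≤ 1/2)).mp h' with h2 | h2
    · exact not_half x h (round x) (by linarith)
    · exact not_half x h (round x - 1) (by push_cast; linarith)

lemma step19 (m : ℤ) (a b : ℝ) (ha : |a - m| < 1/2) (hb : |b - m| < 1/2) (hab : a ≤ b) :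
    Real.pi * (b - a) ≤ Real.tan (Real.pi * b) - Real.tan (Real.pi * a) := by
  rcases eq_or_lt_of_le hab with rfl | hab
  · simp
  have hcos : ∀ t ∈ Set.Icc a b, Real.cos (Real.pi * t) ≠ 0 := by
    intro t ht hc0
    rw [Real.cos_eq_zero_iff] at hc0
    obtain ⟨k, hk⟩ := hc0
    have ht' : t = (2*(k:ℝ)+1)/2 := by
      apply mul_left_cancel₀ Real.pi_ne_zero
      rw [hk]; ring
    rw [abs_lt] at ha hb
    have h1 : (m:ℝ) - 1/2 < t := lt_of_lt_of_le (by linarith [ha.1]) ht.1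
    have h2 : t < m + 1/2 := lt_of_le_of_lt ht.2 (by linarith [hb.2])
    have hk1 : ((m:ℝ) - 1 : ℝ) < (k:ℝ) := by rw [ht'] at h1; linarith
    have hk2 : (k:ℝ) < (m:ℝ) := by rw [ht'] at h2; linarith
    have hk1' : m - 1 < k := by exact_mod_cast hk1
    have hk2' : k < m := by exact_mod_cast hk2
    omega
  have hderiv : ∀ t ∈ Set.Icc a b, HasDerivAt (fun t => Real.tan (Real.pi * t))
      (1 / Real.cos (Real.pi * t) ^ 2 * Real.pi) t := by
    intro t ht
    have h1 : HasDerivAt (fun t : ℝ => Real.pi * t) Real.pi t := by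
      simpa using (hasDerivAt_id t).const_mul Real.pi
    exact (Real.hasDerivAt_tan (hcos t ht)).comp t h1
  obtain ⟨c, hc, hslope⟩ := exists_hasDerivAt_eq_slope (fun t => Real.tan (Real.pi * t))
    (fun t => 1 / Real.cos (Real.pi * t) ^ 2 * Real.pi) hab
    (fun t ht => (hderiv t ht).continuousAt.continuousWithinAt)
    (fun t ht => hderiv t (Set.mem_Icc_of_Ioo ht))
  have hcc := hcos c (Set.mem_Icc_of_Ioo hc)
  have hc2 : 0 < Real.cos (Real.pi * c) ^ 2 :=
    lt_of_le_of_ne (sq_nonneg _) (Ne.symm (pow_ne_zero 2 hcc))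
  have h1 : (1:ℝ) ≤ 1 / Real.cos (Real.pi * c) ^ 2 := by
    rw [le_div_iff₀ hc2]
    nlinarith [Real.neg_one_le_cos (Real.pi*c), Real.cos_le_one (Real.pi*c)]
  have hba : 0 < b - a := sub_pos.mpr hab
  rw [eq_div_iff hba.ne'] at hslope
  rw [← hslope]
  have := mul_le_mul_of_nonneg_right (mul_le_mul_of_nonneg_right h1 Real.pi_pos.le) hba.le
  linarith

lemma key19 (x y : ℝ) (hx : Real.cos (Real.pi * x) ≠ 0) (hy : Real.cos (Real.pi * y) ≠ 0) :
    Real.pi * distZ (x - y) ≤ |Real.tan (Real.pi * x) - Real.tan (Real.pi * y)| := by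
  set m := round x with hm
  set n := round y with hn
  set y' := y - ((n:ℝ) - m) with hy'def
  have hxm : |x - m| < 1/2 := frac_lt x hx
  have hy'm : |y' - m| < 1/2 := by
    have := frac_lt y hy
    rw [hy'def]
    have he : y - ((n:ℝ) - m) - m = y - n := by ring
    rw [he]; exact this
  have htan : Real.tan (Real.pi * y') = Real.tan (Real.pi * y) := by
    have he : Real.pi * y' = Real.pi * y - ((n - m : ℤ) : ℝ) * Real.pi := by
      rw [hy'def]; push_cast; ring
    rw [he, Real.tan_periodic.sub_int_mul_eq]
  have hdist : distZ (x - y) ≤ |x - y'| := by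
    have h := distZ_le (x - y) (m - n)
    have he : x - y - ((m - n : ℤ) : ℝ) = x - y' := by rw [hy'def]; push_cast; ring
    rwa [he] at h
  have hπ := Real.pi_pos
  have h0 : Real.pi * distZ (x - y) ≤ Real.pi * |x - y'| :=
    mul_le_mul_of_nonneg_left hdist hπ.le
  refine h0.trans ?_
  rcases le_total x y' with h | h
  · have hstep := step19 m x y' hxm hy'm h
    have habs : |x - y'| = y' - x := by rw [abs_sub_comm]; exact abs_of_nonneg (by linarith)
    rw [habs]
    calc Real.pi * (y' - x) ≤ Real.tan (Real.pi * y') - Real.tan (Real.pi * x) := hstep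
      _ ≤ |Real.tan (Real.pi * y') - Real.tan (Real.pi * x)| := le_abs_self _
      _ = |Real.tan (Real.pi * x) - Real.tan (Real.pi * y)| := by rw [← htan, abs_sub_comm]
  · have hstep := step19 m y' x hy'm hxm h
    have habs : |x - y'| = x - y' := abs_of_nonneg (by linarith)
    rw [habs]
    calc Real.pi * (x - y') ≤ Real.tan (Real.pi * x) - Real.tan (Real.pi * y') := hstep
      _ ≤ |Real.tan (Real.pi * x) - Real.tan (Real.pi * y')| := le_abs_self _
      _ = |Real.tan (Real.pi * x) - Real.tan (Real.pi * y)| := by rw [htan]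

theorem stmt19 (d : ℕ) (τ γ : ℝ) (hτ : 0 < τ) (hγ : 0 < γ) (ω : Fin d → ℝ)
    (hdio : ∀ i : Fin d → ℤ, i ≠ 0 → γ * (absInf i) ^ (-τ) ≤ distZ (dotProd i ω))
    (hdef : ∀ i : Fin d → ℤ, Real.cos (Real.pi * dotProd i ω) ≠ 0) :
    (∀ x y : ℝ, Real.cos (Real.pi * x) ≠ 0 → Real.cos (Real.pi * y) ≠ 0 →
      Real.pi * distZ (x - y) ≤ |Real.tan (Real.pi * x) - Real.tan (Real.pi * y)|) ∧
    (∀ i j : Fin d → ℤ, i ≠ j →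
      Real.pi * γ * (absInf (i - j)) ^ (-τ) ≤
        |Real.tan (Real.pi * dotProd i ω) - Real.tan (Real.pi * dotProd j ω)|) := by
  constructor
  · exact key19
  · intro i j hij
    have hsub : dotProd i ω - dotProd j ω = dotProd (i - j) ω := by
      simp [dotProd, ← Finset.sum_sub_distrib, sub_mul]
    have h1 := key19 (dotProd i ω) (dotProd j ω) (hdef i) (hdef j)
    have h2 := hdio (i - j) (sub_ne_zero.mpr hij)
    rw [hsub] at h1
    calc Real.pi * γ * (absInf (i - j)) ^ (-τ)
        = Real.pi * (γ * (absInf (i - j)) ^ (-τ)) := by ring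
      _ ≤ Real.pi * distZ (dotProd (i - j) ω) :=
          mul_le_mul_of_nonneg_left h2 Real.pi_pos.le
      _ ≤ _ := h1
end
end
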